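/- arXiv:1011.5159 — 6 statements merged into one kernel-verified Lean document; each statement's English description precedes it below -/
import Mathlib

section
/- Let S be a set and let 𝐒 = (S_i)_{i∈ℕ} be a filtration of S (i.e. S_0 = ∅, S_i ⊆ S_{i+1} for all i, and S = ⋃_{i∈ℕ} S_i) such that each S_i is finite. Then the topology on TO(S) induced by the metric d_𝐒 coincides with the topology 𝒰 generated by the subbasis {𝔘_{(a,b)} : (a,b) ∈ S×S}. In particular, the metric topology is independent of the chosen filtration of S. -/
/-- A total ordering on `S`: an antisymmetric, transitive and total binary relation. -/
def IsTotalOrdering {S : Type*} (r : S → S → Prop) : Prop :=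
  (∀ a b, r a b → r b a → a = b) ∧ (∀ a b c, r a b → r b c → r a c) ∧ (∀ a b, r a b ∨ r b a)

/-- `TO S` is the set of all total orderings on `S`. -/
def TO (S : Type*) : Type _ := {r : S → S → Prop // IsTotalOrdering r}

/-- The underlying relation of a total ordering. -/
def TO.rel {S : Type*} (r : TO S) : S → S → Prop := Subtype.val r

/-- The subbasic open set `𝔘_{(a,b)} = {≼ ∈ TO(S) : a ≼ b}`. -/
def USet {S : Type*} (a b : S) : Set (TO S) := {r | r.rel a b}

/-- The topology `𝒰` on `TO S`: the coarsest topology for which all `𝔘_{(a,b)}` are open. -/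
instance TOTop (S : Type*) : TopologicalSpace (TO S) :=
  TopologicalSpace.generateFrom {U | ∃ a b, U = USet a b}


/-- The distance attached to a filtration `Sf` of `S`:
`d(≼', ≼'') = 2^{-r}` where `r = sup{i : ≼' and ≼'' restrict to the same relation on Sf i}`,
with the convention `2^{-∞} = 0`, i.e. the distance is `0` when the two orderings are equal. -/
noncomputable def dFil {S : Type*} (Sf : ℕ → Set S) (r r' : TO S) : ℝ :=
  letI := Classical.propDecidable (r = r')
  if r = r' then 0
  else (2 : ℝ)⁻¹ ^ sSup {i : ℕ | ∀ a ∈ Sf i, ∀ b ∈ Sf i, (r.rel a b ↔ r'.rel a b)}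

/-! The ball of radius `ε > 0` around `≼` is the union of the sets of orderings that agree with `≼`
on some `S_j` with `2⁻ʲ < ε`; each such set is a finite intersection of sets `𝔘_{(a,b)}` and of
their complements `𝔘_{(a,b)}ᶜ = 𝔘_{(b,a)}` (`a ≠ b`), hence `𝒰`-open. Conversely, if `a ≼ b` with
`a, b ∈ S_k`, then the ball of radius `2⁻ᵏ` around `≼` lies in `𝔘_{(a,b)}`. -/

namespace TO

variable {S : Type*}

theorem rel_refl (r : TO S) (a : S) : r.rel a a := (r.2.2.2 a a).elim id id

theorem ext_rel {r r' : TO S} (h : ∀ a b, r.rel a b ↔ r'.rel a b) : r = r' :=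
  Subtype.ext <| funext fun a => funext fun b => propext (h a b)

def AgreeOn (s : Set S) (r r' : TO S) : Prop :=
  ∀ a ∈ s, ∀ b ∈ s, (r.rel a b ↔ r'.rel a b)

theorem AgreeOn.refl (s : Set S) (r : TO S) : AgreeOn s r r := fun _ _ _ _ => Iff.rfl

theorem AgreeOn.mono {s t : Set S} {r r' : TO S} (h : AgreeOn t r r') (hst : s ⊆ t) :
    AgreeOn s r r' := fun a ha b hb => h a (hst ha) b (hst hb)

theorem compl_USet {a b : S} (hab : a ≠ b) : (USet a b)ᶜ = USet b a := by
  ext r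
  refine ⟨fun h => (r.2.2.2 a b).resolve_left h, fun hba hab' => hab (r.2.1 a b hab' hba)⟩

theorem compl_USet_self (a : S) : (USet a a)ᶜ = (∅ : Set (TO S)) :=
  Set.compl_empty_iff.2 <| Set.eq_univ_of_forall fun r => rel_refl r a

theorem isOpen_USet (a b : S) : IsOpen (USet a b) :=
  TopologicalSpace.isOpen_generateFrom_of_mem ⟨a, b, rfl⟩

theorem isClopen_USet (a b : S) : IsClopen (USet a b) := by
  refine ⟨⟨?_⟩, isOpen_USet a b⟩
  rcases eq_or_ne a b with rfl | hab
  · rw [compl_USet_self]; exact isOpen_empty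
  · rw [compl_USet hab]; exact isOpen_USet b a

theorem isOpen_setOf_agreeOn {s : Set S} (hs : s.Finite) (r : TO S) :
    IsOpen {r' | AgreeOn s r r'} := by
  simp only [AgreeOn, Set.ofPred_forall]
  refine hs.isOpen_biInter fun a _ => hs.isOpen_biInter fun b _ => ?_
  by_cases hab : r.rel a b
  · simp only [hab, true_iff]
    exact (isClopen_USet a b).isOpen
  · simp only [hab, false_iff]
    exact (isClopen_USet a b).compl.isOpen

end TO

open TO

section Filtration

variable {S : Type*} {Sf : ℕ → Set S}

theorem Monotone.exists_mem_mem_of_iUnion_eq_univ (hmono : Monotone Sf)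
    (hunion : ⋃ i, Sf i = Set.univ) (a b : S) : ∃ k, a ∈ Sf k ∧ b ∈ Sf k := by
  obtain ⟨i, ha⟩ := Set.mem_iUnion.1 (hunion ▸ Set.mem_univ a)
  obtain ⟨j, hb⟩ := Set.mem_iUnion.1 (hunion ▸ Set.mem_univ b)
  exact ⟨max i j, hmono (le_max_left i j) ha, hmono (le_max_right i j) hb⟩

theorem bddAbove_setOf_agreeOn (hmono : Monotone Sf) (hunion : ⋃ i, Sf i = Set.univ)
    {r r' : TO S} (h : r ≠ r') : BddAbove {i | AgreeOn (Sf i) r r'} := by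
  obtain ⟨a, b, hab⟩ : ∃ a b, ¬(r.rel a b ↔ r'.rel a b) := by
    by_contra! hall
    exact h (ext_rel hall)
  obtain ⟨k, ha, hb⟩ := hmono.exists_mem_mem_of_iUnion_eq_univ hunion a b
  refine ⟨k, fun i hi => ?_⟩
  by_contra! hki
  exact hab (hi.mono (hmono hki.le) a ha b hb)

theorem agreeOn_sSup (h0 : Sf 0 = ∅) (hmono : Monotone Sf) (hunion : ⋃ i, Sf i = Set.univ)
    {r r' : TO S} (h : r ≠ r') : AgreeOn (Sf (sSup {i | AgreeOn (Sf i) r r'})) r r' :=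
  Nat.sSup_mem ⟨0, by simp [AgreeOn, h0]⟩ (bddAbove_setOf_agreeOn hmono hunion h)

theorem dFil_self (Sf : ℕ → Set S) (r : TO S) : dFil Sf r r = 0 := by
  simp [dFil]

theorem dFil_of_ne (Sf : ℕ → Set S) {r r' : TO S} (h : r ≠ r') :
    dFil Sf r r' = (2 : ℝ)⁻¹ ^ sSup {i | AgreeOn (Sf i) r r'} := by
  simp [dFil, h, AgreeOn]

theorem dFil_le_of_agreeOn (hmono : Monotone Sf) (hunion : ⋃ i, Sf i = Set.univ)
    {r r' : TO S} {i : ℕ} (h : AgreeOn (Sf i) r r') : dFil Sf r r' ≤ (2 : ℝ)⁻¹ ^ i := by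
  rcases eq_or_ne r r' with rfl | hne
  · rw [dFil_self]; positivity
  · rw [dFil_of_ne Sf hne]
    exact pow_le_pow_of_le_one (by norm_num) (by norm_num)
      (le_csSup (bddAbove_setOf_agreeOn hmono hunion hne) h)

theorem dFil_lt_iff (h0 : Sf 0 = ∅) (hmono : Monotone Sf) (hunion : ⋃ i, Sf i = Set.univ)
    {r r' : TO S} {ε : ℝ} (hε : 0 < ε) :
    dFil Sf r r' < ε ↔ ∃ j, (2 : ℝ)⁻¹ ^ j < ε ∧ AgreeOn (Sf j) r r' := by
  refine ⟨fun hd => ?_, fun ⟨j, hj, h⟩ => (dFil_le_of_agreeOn hmono hunion h).trans_lt hj⟩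
  rcases eq_or_ne r r' with rfl | hne
  · obtain ⟨j, hj⟩ := exists_pow_lt_of_lt_one hε (by norm_num : (2 : ℝ)⁻¹ < 1)
    exact ⟨j, hj, AgreeOn.refl _ r⟩
  · rw [dFil_of_ne Sf hne] at hd
    exact ⟨_, hd, agreeOn_sSup h0 hmono hunion hne⟩

end Filtration

/-- if `𝐒 = (S_i)` is a filtration of `S` (`S_0 = ∅`, `S_i ⊆ S_{i+1}`,
`⋃ S_i = S`) with each `S_i` finite, then the topology on `TO(S)` induced by the metric
`d_𝐒` (generated by the open balls of `d_𝐒`) coincides with the topology `𝒰` generated by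
the sets `𝔘_{(a,b)}`; in particular the metric topology does not depend on the chosen
filtration. -/
theorem metricTopology_eq_U {S : Type*} (Sf : ℕ → Set S)
    (h0 : Sf 0 = ∅) (hmono : ∀ i, Sf i ⊆ Sf (i + 1)) (hunion : (⋃ i, Sf i) = Set.univ)
    (hfin : ∀ i, (Sf i).Finite) :
    TopologicalSpace.generateFrom
        {B : Set (TO S) | ∃ (r : TO S) (ε : ℝ), 0 < ε ∧ B = {r' | dFil Sf r r' < ε}} =
      TOTop S := by
  replace hmono : Monotone Sf := monotone_nat_of_le_succ hmono
  refine le_antisymm (TopologicalSpace.le_generateFrom_iff_subset_isOpen.2 ?_)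
    (TopologicalSpace.le_generateFrom_iff_subset_isOpen.2 ?_)
  · rintro _ ⟨a, b, rfl⟩
    rw [Set.mem_ofPred_eq]
    -- `(_)` takes the instance from the goal (the ball topology) instead of synthesizing `TOTop`
    refine (@isOpen_iff_forall_mem_open _ (_) _).2 fun r hr => ?_
    obtain ⟨k, ha, hb⟩ := hmono.exists_mem_mem_of_iUnion_eq_univ hunion a b
    refine ⟨{r' | dFil Sf r r' < (2 : ℝ)⁻¹ ^ k}, fun r' hr' => ?_,
      TopologicalSpace.isOpen_generateFrom_of_mem ⟨r, _, by positivity, rfl⟩, ?_⟩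
    · obtain ⟨j, hj, hagree⟩ := (dFil_lt_iff h0 hmono hunion (by positivity)).1 hr'
      have hkj : k ≤ j := ((pow_lt_pow_iff_right_of_lt_one₀ (by norm_num) (by norm_num)).1 hj).le
      exact (hagree.mono (hmono hkj) a ha b hb).1 hr
    · simp only [Set.mem_ofPred_eq, dFil_self]
      positivity
  · rintro _ ⟨r, ε, hε, rfl⟩
    have hball : {r' | dFil Sf r r' < ε} =
        ⋃ j ∈ {j : ℕ | (2 : ℝ)⁻¹ ^ j < ε}, {r' | AgreeOn (Sf j) r r'} := by
      ext r'
      simp only [Set.mem_ofPred_eq, Set.mem_iUnion, exists_prop, dFil_lt_iff h0 hmono hunion hε]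
    rw [hball]
    exact isOpen_biUnion fun j _ => isOpen_setOf_agreeOn (hfin j) r
end

section
/- For any set S, the topological space TO(S) of all total orderings on S, equipped with the topology 𝒰 generated by the sets 𝔘_{(a,b)}, is compact. -/
/-!
Every ultrafilter `F` on `TO(S)` converges to the relation `a ≼_F b :↔ 𝔘_{(a,b)} ∈ F`.
Each axiom of a total ordering is inherited from the members of `F` because `F` is a proper
filter closed under finite intersections, and totality because an ultrafilter contains one of
the two sets `𝔘_{(a,b)}`, `𝔘_{(b,a)}` covering `TO(S)`. Convergence is then immediate, since
every subbasic neighbourhood `𝔘_{(a,b)}` of `≼_F` belongs to `F`.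
-/

namespace TO

variable {S : Type*}

theorem uSet_union_uSet_swap (a b : S) : USet a b ∪ USet b a = Set.univ :=
  Set.eq_univ_of_forall fun r => r.2.2.2 a b

def limitRel (F : Ultrafilter (TO S)) (a b : S) : Prop := USet a b ∈ F

theorem isTotalOrdering_limitRel (F : Ultrafilter (TO S)) : IsTotalOrdering (limitRel F) := by
  refine ⟨fun a b hab hba => ?_, fun a b c hab hbc => ?_, fun a b => ?_⟩
  · obtain ⟨r, hrab, hrba⟩ := F.nonempty_of_mem (F.inter_mem hab hba)
    exact r.2.1 a b hrab hrba
  · exact F.mem_of_superset (F.inter_mem hab hbc) fun r ⟨hrab, hrbc⟩ => r.2.2.1 a b c hrab hrbc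
  · have hcover : USet a b ∪ USet b a ∈ F := by
      rw [uSet_union_uSet_swap]
      exact F.univ_mem
    exact Ultrafilter.union_mem_iff.mp hcover

def limit (F : Ultrafilter (TO S)) : TO S := ⟨limitRel F, isTotalOrdering_limitRel F⟩

theorem ultrafilter_le_nhds_limit (F : Ultrafilter (TO S)) :
    (F : Filter (TO S)) ≤ nhds (limit F) := by
  rw [TopologicalSpace.nhds_generateFrom]
  refine le_iInf₂ fun U ⟨hlim, a, b, hU⟩ => ?_
  subst hU
  exact Filter.le_principal_iff.mpr hlim

end TO

/-- `TO S` with the topology `𝒰` is compact. -/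
theorem TO_compactSpace (S : Type*) : CompactSpace (TO S) :=
  ⟨isCompact_iff_ultrafilter_le_nhds.mpr fun F _ =>
    ⟨TO.limit F, Set.mem_univ _, TO.ultrafilter_le_nhds_limit F⟩⟩
end

section
/- The space MO(M) of all monomial orderings of the polynomial ring K[X,Y], with the relative topology inherited from TO(M), is compact. -/
/-- The exponent vector `(λ, μ)` as a finitely supported function on `Fin n ⊕ Fin n`. -/
noncomputable def expof {n : ℕ} (lam mu : Fin n → ℕ) : (Fin n ⊕ Fin n) →₀ ℕ :=
  Finsupp.equivFunOnFinite.symm (Sum.elim lam mu)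

/-- The set `M` of monomials `X^λ Y^μ` of the polynomial ring `K[X,Y]`. -/
def PolyMonomials (K : Type*) [Field K] (n : ℕ) : Set (MvPolynomial (Fin n ⊕ Fin n) K) :=
  {p | ∃ lam mu : Fin n → ℕ, p = MvPolynomial.monomial (expof lam mu) 1}

/-- The monomial `X^λ Y^μ` as an element of `M`. -/
noncomputable def monEl (K : Type*) [Field K] {n : ℕ} (lam mu : Fin n → ℕ) :
    ↥(PolyMonomials K n) :=
  ⟨MvPolynomial.monomial (expof lam mu) 1, lam, mu, rfl⟩

/-- A monomial ordering of `K[X,Y]`: a total ordering `≤` on `M` with `1 ≤ X^λY^μ` for all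
`λ, μ`, compatible with the addition of exponents. -/
def IsMonomialOrdering {K : Type*} [Field K] {n : ℕ} (r : TO ↥(PolyMonomials K n)) : Prop :=
  (∀ lam mu, r.rel (monEl K 0 0) (monEl K lam mu)) ∧
  ∀ lam mu rho sig al be : Fin n → ℕ,
    r.rel (monEl K lam mu) (monEl K rho sig) →
      r.rel (monEl K (lam + al) (mu + be)) (monEl K (rho + al) (sig + be))

/-- The set `MO(M)` of all monomial orderings of `K[X,Y]`. -/
def MOSet (K : Type*) [Field K] (n : ℕ) : Set (TO ↥(PolyMonomials K n)) :=
  {r | IsMonomialOrdering r}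

section Aux

variable {S : Type*}

lemma TO.rel_total (r : TO S) (a b : S) : r.rel a b ∨ r.rel b a := r.2.2.2 a b

lemma TO.rel_refl_s5 (r : TO S) (a : S) : r.rel a a := (r.rel_total a a).elim id id

lemma TO.rel_antisymm (r : TO S) {a b : S} (h1 : r.rel a b) (h2 : r.rel b a) : a = b :=
  r.2.1 a b h1 h2

lemma TO.rel_trans (r : TO S) {a b c : S} (h1 : r.rel a b) (h2 : r.rel b c) : r.rel a c :=
  r.2.2.1 a b c h1 h2

lemma isOpen_USet (a b : S) : IsOpen (USet a b) :=
  TopologicalSpace.isOpen_generateFrom_of_mem ⟨a, b, rfl⟩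

lemma compl_USet (a b : S) : (USet a b)ᶜ = USet b a ∩ {_r : TO S | a ≠ b} := by
  ext r
  simp only [Set.mem_compl_iff, USet, Set.mem_setOf_eq, Set.mem_inter_iff]
  constructor
  · intro h
    refine ⟨(r.rel_total a b).resolve_left h, ?_⟩
    rintro rfl
    exact h (r.rel_refl_s5 a)
  · rintro ⟨hba, hne⟩ hab
    exact hne (r.rel_antisymm hab hba)

lemma isOpen_ne_const (a b : S) : IsOpen {_r : TO S | a ≠ b} := by
  by_cases h : a = b
  · simp [h]
  · have : {_r : TO S | a ≠ b} = Set.univ := by ext r; simp [h]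
    rw [this]; exact isOpen_univ

lemma isClosed_USet (a b : S) : IsClosed (USet a b) := by
  rw [← isOpen_compl_iff, compl_USet]
  exact (isOpen_USet b a).inter (isOpen_ne_const a b)

/-- The embedding of `TO S` into `S → S → Bool`. -/
noncomputable def TOemb : TO S → (S → S → Bool) :=
  fun r a b => @decide (r.rel a b) (Classical.propDecidable _)

lemma TOemb_eq_true_iff (r : TO S) (a b : S) : TOemb r a b = true ↔ r.rel a b :=
  @decide_eq_true_iff _ (Classical.propDecidable _)

lemma TOemb_preimage (a b : S) : TOemb ⁻¹' {g : S → S → Bool | g a b = true} = USet a b := by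
  ext r
  simp [USet, TOemb_eq_true_iff]

lemma continuous_TOemb : Continuous (TOemb (S := S)) := by
  refine continuous_pi fun a => continuous_pi fun b => ?_
  rw [continuous_discrete_rng]
  intro v
  cases v
  · have : (fun r : TO S => TOemb r a b) ⁻¹' {false} = (USet a b)ᶜ := by
      ext r
      simp [USet, ← TOemb_eq_true_iff]
    rw [this, compl_USet]
    exact (isOpen_USet b a).inter (isOpen_ne_const a b)
  · have : (fun r : TO S => TOemb r a b) ⁻¹' {true} = USet a b := TOemb_preimage a b
    rw [this]
    exact isOpen_USet a b

lemma inducing_TOemb : Topology.IsInducing (TOemb (S := S)) := by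
  constructor
  refine le_antisymm (continuous_iff_le_induced.mp continuous_TOemb) ?_
  refine @le_generateFrom _ (TopologicalSpace.induced TOemb inferInstance) _ ?_
  rintro U ⟨a, b, rfl⟩
  rw [← TOemb_preimage a b]
  have cont : Continuous (fun g : S → S → Bool => g a b) :=
    (continuous_apply b).comp (continuous_apply a)
  exact isOpen_induced ((isOpen_discrete ({true} : Set Bool)).preimage cont)

lemma range_TOemb :
    Set.range (TOemb (S := S)) =
      {g : S → S → Bool |
        (∀ a b, g a b = true ∨ g b a = true) ∧
        (∀ a b, g a b = true → g b a = true → a = b) ∧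
        (∀ a b c, g a b = true → g b c = true → g a c = true)} := by
  ext g
  constructor
  · rintro ⟨r, rfl⟩
    refine ⟨fun a b => ?_, fun a b h1 h2 => ?_, fun a b c h1 h2 => ?_⟩
    · rcases r.rel_total a b with h | h
      · exact Or.inl ((TOemb_eq_true_iff r a b).mpr h)
      · exact Or.inr ((TOemb_eq_true_iff r b a).mpr h)
    · exact r.rel_antisymm ((TOemb_eq_true_iff r a b).mp h1) ((TOemb_eq_true_iff r b a).mp h2)
    · exact (TOemb_eq_true_iff r a c).mpr
        (r.rel_trans ((TOemb_eq_true_iff r a b).mp h1) ((TOemb_eq_true_iff r b c).mp h2))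
  · rintro ⟨htot, hanti, htrans⟩
    refine ⟨⟨fun a b => g a b = true, fun a b => hanti a b, fun a b c => htrans a b c,
      fun a b => htot a b⟩, ?_⟩
    funext a b
    rw [Bool.eq_iff_iff]
    exact TOemb_eq_true_iff _ a b

lemma isClosed_range_TOemb : IsClosed (Set.range (TOemb (S := S))) := by
  rw [range_TOemb]
  have hclopen : ∀ a b : S, IsClopen {g : S → S → Bool | g a b = true} := by
    intro a b
    have cont : Continuous (fun g : S → S → Bool => g a b) :=
      (continuous_apply b).comp (continuous_apply a)
    exact (isClopen_discrete ({true} : Set Bool)).preimage cont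
  have h1 : IsClosed {g : S → S → Bool | ∀ a b, g a b = true ∨ g b a = true} := by
    have : {g : S → S → Bool | ∀ a b, g a b = true ∨ g b a = true} =
        ⋂ a, ⋂ b, ({g : S → S → Bool | g a b = true} ∪ {g | g b a = true}) := by
      ext g; simp [Set.mem_iInter]
    rw [this]
    exact isClosed_iInter fun a => isClosed_iInter fun b =>
      ((hclopen a b).isClosed).union ((hclopen b a).isClosed)
  have h2 : IsClosed {g : S → S → Bool | ∀ a b, g a b = true → g b a = true → a = b} := by
    have : {g : S → S → Bool | ∀ a b, g a b = true → g b a = true → a = b} =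
        ⋂ a, ⋂ b, (({g : S → S → Bool | g a b = true} ∩ {g | g b a = true})ᶜ ∪
          {_g : S → S → Bool | a = b}) := by
      ext g
      simp only [Set.mem_setOf_eq, Set.mem_iInter, Set.mem_union, Set.mem_compl_iff,
        Set.mem_inter_iff, not_and]
      constructor
      · intro h a b
        by_cases hab : g a b = true
        · by_cases hba : g b a = true
          · exact Or.inr (h a b hab hba)
          · exact Or.inl fun _ => hba
        · exact Or.inl fun h' => absurd h' hab
      · intro h a b hab hba
        rcases h a b with h' | h'
        · exact absurd hba (h' hab)
        · exact h'
    rw [this]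
    refine isClosed_iInter fun a => isClosed_iInter fun b => IsClosed.union ?_ ?_
    · exact (((hclopen a b).isOpen).inter ((hclopen b a).isOpen)).isClosed_compl
    · by_cases h : a = b
      · have : {_g : S → S → Bool | a = b} = Set.univ := by ext g; simp [h]
        rw [this]; exact isClosed_univ
      · have : {_g : S → S → Bool | a = b} = ∅ := by ext g; simp [h]
        rw [this]; exact isClosed_empty
  have h3 : IsClosed {g : S → S → Bool |
      ∀ a b c, g a b = true → g b c = true → g a c = true} := by
    have : {g : S → S → Bool | ∀ a b c, g a b = true → g b c = true → g a c = true} =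
        ⋂ a, ⋂ b, ⋂ c, (({g : S → S → Bool | g a b = true} ∩ {g | g b c = true})ᶜ ∪
          {g : S → S → Bool | g a c = true}) := by
      ext g
      simp only [Set.mem_setOf_eq, Set.mem_iInter, Set.mem_union, Set.mem_compl_iff,
        Set.mem_inter_iff, not_and]
      constructor
      · intro h a b c
        by_cases hab : g a b = true
        · by_cases hbc : g b c = true
          · exact Or.inr (h a b c hab hbc)
          · exact Or.inl fun _ => hbc
        · exact Or.inl fun h' => absurd h' hab
      · intro h a b c hab hbc
        rcases h a b c with h' | h'
        · exact absurd hbc (h' hab)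
        · exact h'
    rw [this]
    refine isClosed_iInter fun a => isClosed_iInter fun b => isClosed_iInter fun c =>
      IsClosed.union ?_ ((hclopen a c).isClosed)
    exact (((hclopen a b).isOpen).inter ((hclopen b c).isOpen)).isClosed_compl
  have : {g : S → S → Bool |
        (∀ a b, g a b = true ∨ g b a = true) ∧
        (∀ a b, g a b = true → g b a = true → a = b) ∧
        (∀ a b c, g a b = true → g b c = true → g a c = true)} =
      {g : S → S → Bool | ∀ a b, g a b = true ∨ g b a = true} ∩
      ({g : S → S → Bool | ∀ a b, g a b = true → g b a = true → a = b} ∩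
       {g : S → S → Bool | ∀ a b c, g a b = true → g b c = true → g a c = true}) := by
    ext g; simp [Set.mem_inter_iff, and_assoc]
  rw [this]
  exact h1.inter (h2.inter h3)

lemma TO.compactSpace : CompactSpace (TO S) := by
  constructor
  rw [inducing_TOemb.isCompact_iff, Set.image_univ]
  exact isClosed_range_TOemb.isCompact

end Aux

lemma isClosed_MOSet (K : Type*) [Field K] (n : ℕ) : IsClosed (MOSet K n) := by
  have : MOSet K n =
      (⋂ lam, ⋂ mu, USet (monEl K 0 0) (monEl K lam mu)) ∩
      ⋂ lam, ⋂ mu, ⋂ rho, ⋂ sig, ⋂ al, ⋂ be,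
        ((USet (monEl K lam mu) (monEl K rho sig))ᶜ ∪
          USet (monEl K (lam + al) (mu + be)) (monEl K (rho + al) (sig + be))) := by
    ext r
    simp only [MOSet, IsMonomialOrdering, Set.mem_setOf_eq, Set.mem_inter_iff, Set.mem_iInter,
      Set.mem_union, Set.mem_compl_iff, USet]
    constructor
    · rintro ⟨h1, h2⟩
      refine ⟨h1, fun lam mu rho sig al be => ?_⟩
      by_cases h : r.rel (monEl K lam mu) (monEl K rho sig)
      · exact Or.inr (h2 lam mu rho sig al be h)
      · exact Or.inl h
    · rintro ⟨h1, h2⟩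
      refine ⟨h1, fun lam mu rho sig al be hrel => ?_⟩
      rcases h2 lam mu rho sig al be with h | h
      · exact absurd hrel h
      · exact h
  rw [this]
  refine IsClosed.inter ?_ ?_
  · exact isClosed_iInter fun lam => isClosed_iInter fun mu => isClosed_USet _ _
  · refine isClosed_iInter fun lam => isClosed_iInter fun mu => isClosed_iInter fun rho =>
      isClosed_iInter fun sig => isClosed_iInter fun al => isClosed_iInter fun be =>
      IsClosed.union ((isOpen_USet _ _).isClosed_compl) (isClosed_USet _ _)

/-- the space `MO(M)` of all monomial orderings of `K[X,Y]`, with the relative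
topology inherited from `TO(M)`, is compact. -/
theorem MOSet_isCompact (K : Type*) [Field K] [CharZero K] (n : ℕ) (hn : 1 ≤ n) :
    IsCompact (MOSet K n) := by
  have : CompactSpace (TO ↥(PolyMonomials K n)) := TO.compactSpace
  exact (isClosed_MOSet K n).isCompact
end

section
/- Let L be a left ideal of the n-th Weyl algebra W and let ≼ be a normal ordering of W. Then L admits a Gröbner basis with respect to ≼, i.e. there exists a finite subset B ⊆ L with L = Σ_{b∈B} Wb and LT_≼(L) = ⟨LT_≼(b) : b ∈ B, b ≠ 0⟩. -/
open MvPolynomial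

section Weyl

variable {K : Type*} [Field K] {n : ℕ} {W : Type*} [Ring W] [Algebra K W]

/-- The normal monomial `ξ^λ ∂^μ` of the Weyl algebra, for generators `ξ i` and `∂ i`. -/
def nm (ξ dd : Fin n → W) (lam mu : Fin n → ℕ) : W :=
  (List.ofFn fun i => ξ i ^ lam i).prod * (List.ofFn fun i => dd i ^ mu i).prod

/-- The set `N` of normal monomials `ξ^λ ∂^μ` of the Weyl algebra. -/
def NormalMonomials (ξ dd : Fin n → W) : Set W := {w | ∃ lam mu, w = nm ξ dd lam mu}

/-- The normal monomial `ξ^λ ∂^μ` as an element of `N`. -/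
def nmEl (ξ dd : Fin n → W) (lam mu : Fin n → ℕ) : ↥(NormalMonomials ξ dd) :=
  ⟨nm ξ dd lam mu, lam, mu, rfl⟩

/-- A normal ordering of the Weyl algebra: a total ordering `≼` on `N` such that
`1 = ξ^0∂^0 ≼ ξ^λ∂^μ` for all `λ, μ`, and which is compatible with the addition of
exponents. -/
def IsNormalOrdering (ξ dd : Fin n → W) (r : TO ↥(NormalMonomials ξ dd)) : Prop :=
  (∀ lam mu, r.rel (nmEl ξ dd 0 0) (nmEl ξ dd lam mu)) ∧
  ∀ lam mu rho sig al be : Fin n → ℕ,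
    r.rel (nmEl ξ dd lam mu) (nmEl ξ dd rho sig) →
      r.rel (nmEl ξ dd (lam + al) (mu + be)) (nmEl ξ dd (rho + al) (sig + be))

/-- The set `NO(N)` of all normal orderings. -/
def NOSet (ξ dd : Fin n → W) : Set (TO ↥(NormalMonomials ξ dd)) :=
  {r | IsNormalOrdering ξ dd r}

/-- The normal monomial of `N` corresponding to an exponent vector `d`. -/
noncomputable def nmD (ξ dd : Fin n → W) (d : (Fin n ⊕ Fin n) →₀ ℕ) :
    ↥(NormalMonomials ξ dd) :=
  nmEl ξ dd (fun i => d (Sum.inl i)) (fun i => d (Sum.inr i))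

/-- The ordering on exponent vectors induced by a total ordering `r` on `N`. -/
noncomputable def rD (ξ dd : Fin n → W) (r : TO ↥(NormalMonomials ξ dd))
    (d e : (Fin n ⊕ Fin n) →₀ ℕ) : Prop :=
  r.rel (nmD ξ dd d) (nmD ξ dd e)

/-- `IsLTerm ξ dd Φ r w d` says that the exponent vector `d`, i.e. the normal monomial
`ξ^λ∂^μ` with `(λ,μ) = d`, is the `r`-greatest element of the support of `w`, that is,
`lt_≼(w) = ξ^λ∂^μ` (equivalently `LT_≼(w) = X^λY^μ`). -/
noncomputable def IsLTerm (ξ dd : Fin n → W)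
    (Φ : W ≃ₗ[K] MvPolynomial (Fin n ⊕ Fin n) K) (r : TO ↥(NormalMonomials ξ dd))
    (w : W) (d : (Fin n ⊕ Fin n) →₀ ℕ) : Prop :=
  d ∈ (Φ w).support ∧ ∀ c ∈ (Φ w).support, rD ξ dd r c d

/-- The ideal `LT_≼(L) = ⟨LT_≼(x) : x ∈ L, x ≠ 0⟩` of `K[X,Y]`. -/
noncomputable def LTIdeal (ξ dd : Fin n → W)
    (Φ : W ≃ₗ[K] MvPolynomial (Fin n ⊕ Fin n) K) (r : TO ↥(NormalMonomials ξ dd))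
    (L : Set W) : Ideal (MvPolynomial (Fin n ⊕ Fin n) K) :=
  Ideal.span {p | ∃ x ∈ L, x ≠ 0 ∧ ∃ d, IsLTerm ξ dd Φ r x d ∧ p = monomial d 1}

/-- `B` is a Gröbner basis of the left ideal `L` with respect to `r`: `B` is a finite
subset of `L` with `L = Σ_{b∈B} W·b` and `LT_≼(L) = ⟨LT_≼(b) : b ∈ B, b ≠ 0⟩`. -/
noncomputable def IsGroebnerBasis (ξ dd : Fin n → W)
    (Φ : W ≃ₗ[K] MvPolynomial (Fin n ⊕ Fin n) K) (r : TO ↥(NormalMonomials ξ dd))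
    (L : Submodule W W) (B : Finset W) : Prop :=
  (B : Set W) ⊆ (L : Set W) ∧ Submodule.span W (B : Set W) = L ∧
  LTIdeal ξ dd Φ r (L : Set W) =
    Ideal.span {p | ∃ b ∈ B, b ≠ 0 ∧ ∃ d, IsLTerm ξ dd Φ r b d ∧ p = monomial d 1}

end Weyl

/-!
Transport everything to `K[X,Y]` through `Φ`, writing `E c := Φ⁻¹ (X^c)` for the normal
monomials. A normal ordering is a monomial order on the exponents: it is compatible with addition,
has `0` as least element, hence extends the componentwise order, and is therefore well founded by
Dickson's lemma. The Weyl relations give `E a * E b = E (a + b) + (terms E c with c < a + b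
componentwise)`, so `LT (E e * x) = X^e * LT x` for every `x`. By Hilbert's basis theorem
`LT_≼(L)` is generated by the leading terms of finitely many `b ∈ L`. If `x ∈ L` is nonzero,
`LT x` is divisible by some `LT b`, and subtracting a multiple of `E e * b` lowers the leading
term of `x`; by well-foundedness these `b` generate `L`.
-/

open scoped MonomialOrder

noncomputable abbrev IsTotalOrdering.linearOrder {α : Type*} {le : α → α → Prop}
    (h : IsTotalOrdering le) : LinearOrder α where
  le := le
  le_refl a := (h.2.2 a a).elim id id
  le_trans := h.2.1
  le_antisymm := h.1
  le_total := h.2.2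
  toDecidableLE := Classical.decRel _

/-- A copy of `σ →₀ ℕ` without the pointwise order, to carry a monomial order. -/
def Reordered (σ : Type*) : Type _ := σ →₀ ℕ

noncomputable instance (σ : Type*) : AddCommMonoid (Reordered σ) :=
  inferInstanceAs (AddCommMonoid (σ →₀ ℕ))

noncomputable def MonomialOrder.ofIsTotalOrdering {σ : Type*} [Finite σ]
    {le : (σ →₀ ℕ) → (σ →₀ ℕ) → Prop} (h : IsTotalOrdering le)
    (hadd : ∀ a b, le a b → ∀ c, le (a + c) (b + c)) (hzero : ∀ a, le 0 a) :
    MonomialOrder σ :=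
  letI : LinearOrder (Reordered σ) := h.linearOrder
  let toSyn : (σ →₀ ℕ) ≃+ Reordered σ := AddEquiv.refl _
  have mono : Monotone toSyn := fun a b hab => by
    have := hadd 0 (b - a) (hzero _) a
    rwa [zero_add, tsub_add_cancel_of_le hab] at this
  { syn := Reordered σ
    linearOrderSyn := h.linearOrder
    isOrderedAddMonoid_syn := { add_le_add_left := fun a b hab c => hadd a b hab c }
    toSyn := toSyn
    toSyn_monotone := mono
    wellFoundedLT_syn :=
      haveI := mono.wellQuasiOrderedLE_of_wellQuasiOrderedLE_of_surjective toSyn.surjective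
      inferInstance }

theorem MonomialOrder.ofIsTotalOrdering_le_iff {σ : Type*} [Finite σ]
    {le : (σ →₀ ℕ) → (σ →₀ ℕ) → Prop} (h : IsTotalOrdering le)
    (hadd : ∀ a b, le a b → ∀ c, le (a + c) (b + c)) (hzero : ∀ a, le 0 a)
    {c d : σ →₀ ℕ} : c ≼[ofIsTotalOrdering h hadd hzero] d ↔ le c d :=
  Iff.rfl

namespace MonomialOrder

variable {σ R : Type*} (m : MonomialOrder σ)

section CommRing

variable [CommRing R]

theorem sub_monomial_degree_mem_restrictSupport (p : MvPolynomial σ R) :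
    p - monomial (m.degree p) (m.leadingCoeff p) ∈
      restrictSupport R {c | c ≺[m] m.degree p} := by
  classical
  rw [mem_restrictSupport_iff]
  intro c hc
  rw [Finset.mem_coe, mem_support_iff, coeff_sub, coeff_monomial] at hc
  have hcd : c ≠ m.degree p := by
    rintro rfl
    simp [leadingCoeff] at hc
  rw [if_neg hcd.symm, sub_zero] at hc
  exact lt_of_le_of_ne (m.le_degree (mem_support_iff.mpr hc)) (m.toSyn.injective.ne hcd)

theorem degree_eq_of_sub_monomial_mem {p : MvPolynomial σ R} {s : σ →₀ ℕ} {a : R}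
    (ha : a ≠ 0) (h : p - monomial s a ∈ restrictSupport R {c | c ≺[m] s}) :
    m.degree p = s ∧ m.leadingCoeff p = a := by
  classical
  rw [mem_restrictSupport_iff] at h
  have hcoeff : p.coeff s = a := by
    have : s ∉ (p - monomial s a).support := fun hs => lt_irrefl _ (h hs)
    rw [mem_support_iff, not_not, coeff_sub, coeff_monomial, if_pos rfl, sub_eq_zero] at this
    exact this
  have hs : s ∈ p.support := mem_support_iff.mpr (hcoeff ▸ ha)
  have hdeg : m.degree p = s := by
    refine m.toSyn.injective (le_antisymm (m.degree_le_iff.mpr fun c hc => ?_) (m.le_degree hs))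
    by_cases hcs : c = s
    · rw [hcs]
    · refine le_of_lt (h ?_)
      rwa [Finset.mem_coe, mem_support_iff, coeff_sub, coeff_monomial, if_neg (Ne.symm hcs),
        sub_zero, ← mem_support_iff]
  exact ⟨hdeg, by rw [leadingCoeff, hdeg, hcoeff]⟩

theorem degree_lt_of_mem_restrictSupport {p : MvPolynomial σ R} {s : σ →₀ ℕ} (hp : p ≠ 0)
    (h : p ∈ restrictSupport R {c | c ≺[m] s}) : m.degree p ≺[m] s := by
  rw [mem_restrictSupport_iff] at h
  exact h (m.degree_mem_support hp)

end CommRing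

section LeadingTerms

variable {K W : Type*} [Field K] [Ring W] [Algebra K W] (Φ : W ≃ₗ[K] MvPolynomial σ K)

theorem sub_smul_mem_restrictSupport {f g : MvPolynomial σ K} (hg : g ≠ 0)
    (hfg : m.degree f = m.degree g) :
    f - (m.leadingCoeff f / m.leadingCoeff g) • g ∈
      restrictSupport K {c | c ≺[m] m.degree f} := by
  have hf := m.sub_monomial_degree_mem_restrictSupport f
  have hg' := m.sub_monomial_degree_mem_restrictSupport g
  rw [← hfg] at hg'
  convert sub_mem hf (Submodule.smul_mem _ (m.leadingCoeff f / m.leadingCoeff g) hg') using 1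
  rw [smul_sub, smul_monomial, smul_eq_mul,
    div_mul_cancel₀ _ (m.leadingCoeff_ne_zero_iff.mpr hg), hfg]
  abel

noncomputable def leadingIdeal (S : Set W) : Ideal (MvPolynomial σ K) :=
  Ideal.span ((fun x => monomial (m.degree (Φ x)) 1) '' (S \ {0}))

variable {m Φ} in
theorem exists_degree_le_of_monomial_mem_leadingIdeal {S : Set W} {d : σ →₀ ℕ}
    (h : monomial d (1 : K) ∈ m.leadingIdeal Φ S) :
    ∃ b ∈ S, b ≠ 0 ∧ m.degree (Φ b) ≤ d := by
  rw [leadingIdeal, ← Set.image_image (fun s => monomial s (1 : K)) (fun x => m.degree (Φ x)),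
    mem_ideal_span_monomial_image] at h
  obtain ⟨_, ⟨b, ⟨hbS, hb0⟩, rfl⟩, hle⟩ := h d (by classical simp [support_monomial])
  exact ⟨b, hbS, hb0, hle⟩

theorem basis_mul_sub_monomial_mem
    (hmul : ∀ a b, Φ (Φ.symm (monomial a 1) * Φ.symm (monomial b 1)) - monomial (a + b) 1 ∈
      restrictSupport K {c | c ≺[m] a + b}) (e : σ →₀ ℕ) (x : W) :
    Φ (Φ.symm (monomial e 1) * x) - monomial (e + m.degree (Φ x)) (m.leadingCoeff (Φ x)) ∈
      restrictSupport K {c | c ≺[m] e + m.degree (Φ x)} := by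
  set d := m.degree (Φ x)
  set a := m.leadingCoeff (Φ x)
  let T : MvPolynomial σ K →ₗ[K] MvPolynomial σ K :=
    Φ.toLinearMap ∘ₗ LinearMap.mulLeft K (Φ.symm (monomial e 1)) ∘ₗ Φ.symm.toLinearMap
  have hT : ∀ p, T p = Φ (Φ.symm (monomial e 1) * Φ.symm p) := fun _ => rfl
  have hlow : (restrictSupport K {c | c ≺[m] d}).map T ≤
      restrictSupport K {c | c ≺[m] e + d} := by
    rw [restrictSupport_eq_span, Submodule.map_span_le]
    rintro _ ⟨c, hc, rfl⟩
    have hec : e + c ≺[m] e + d := by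
      rw [map_add, map_add]
      exact add_lt_add_right hc _
    have hlower := restrictSupport_mono (R := K) (t := {c' | c' ≺[m] e + d})
      (fun c' (h : c' ≺[m] e + c) => h.trans hec) (hmul e c)
    rw [hT]
    simpa only [sub_add_cancel] using
      add_mem hlower ((monomial_mem_restrictSupport K (r := 1)).mpr (Or.inl hec))
  have hrest := hlow (Submodule.mem_map_of_mem (m.sub_monomial_degree_mem_restrictSupport (Φ x)))
  have key : Φ (Φ.symm (monomial e 1) * x) - monomial (e + d) a =
      a • (Φ (Φ.symm (monomial e 1) * Φ.symm (monomial d 1)) - monomial (e + d) 1) +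
        T (Φ x - monomial d a) := by
    have hmon : ∀ s : σ →₀ ℕ, monomial s a = a • monomial s 1 := fun s => by
      rw [smul_monomial, smul_eq_mul, mul_one]
    rw [map_sub, hT, hT, LinearEquiv.symm_apply_apply, hmon, hmon, map_smul, mul_smul_comm,
      map_smul]
    module
  rw [key]
  exact add_mem (Submodule.smul_mem _ _ (hmul e d)) hrest

theorem degree_basis_mul
    (hmul : ∀ a b, Φ (Φ.symm (monomial a 1) * Φ.symm (monomial b 1)) - monomial (a + b) 1 ∈
      restrictSupport K {c | c ≺[m] a + b}) (e : σ →₀ ℕ) {x : W} (hx : x ≠ 0) :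
    m.degree (Φ (Φ.symm (monomial e 1) * x)) = e + m.degree (Φ x) ∧
      m.leadingCoeff (Φ (Φ.symm (monomial e 1) * x)) = m.leadingCoeff (Φ x) :=
  m.degree_eq_of_sub_monomial_mem (m.leadingCoeff_ne_zero_iff.mpr (by simpa using hx))
    (m.basis_mul_sub_monomial_mem Φ hmul e x)

variable {m Φ} in
theorem le_of_forall_exists_degree_eq {N L : Submodule K W} (hNL : N ≤ L)
    (h : ∀ x ∈ L, x ≠ 0 → ∃ y ∈ N, y ≠ 0 ∧ m.degree (Φ y) = m.degree (Φ x)) :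
    L ≤ N := by
  suffices ∀ s : m.syn, ∀ x ∈ L, m.toSyn (m.degree (Φ x)) = s → x ∈ N from
    fun x hx => this _ x hx rfl
  intro s
  induction s using WellFoundedLT.induction with
  | _ s ih =>
  rintro x hx rfl
  by_cases hx0 : x = 0
  · simp [hx0]
  obtain ⟨y, hyN, hy0, hdeg⟩ := h x hx hx0
  set k := m.leadingCoeff (Φ x) / m.leadingCoeff (Φ y)
  have hlow := m.sub_smul_mem_restrictSupport (by simpa using hy0) hdeg.symm
  rw [← map_smul, ← map_sub] at hlow
  have hrest : x - k • y ∈ N := by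
    by_cases h0 : x - k • y = 0
    · simp [h0]
    exact ih _ (m.degree_lt_of_mem_restrictSupport (Φ.map_ne_zero_iff.mpr h0) hlow) _
      (L.sub_mem hx (L.smul_mem k (hNL hyN))) rfl
  simpa using N.add_mem hrest (N.smul_mem k hyN)

theorem exists_finset_span_eq_and_leadingIdeal_eq [Finite σ]
    (hmul : ∀ a b, Φ (Φ.symm (monomial a 1) * Φ.symm (monomial b 1)) - monomial (a + b) 1 ∈
      restrictSupport K {c | c ≺[m] a + b}) (L : Submodule W W) :
    ∃ B : Finset W, (B : Set W) ⊆ L ∧ Submodule.span W (B : Set W) = L ∧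
      m.leadingIdeal Φ L = m.leadingIdeal Φ B := by
  classical
  obtain ⟨T, hTL, hT⟩ := (Submodule.fg_span_iff_fg_span_finset_subset _).mp
    (IsNoetherian.noetherian (m.leadingIdeal Φ L))
  obtain ⟨B, hBL, rfl⟩ := Finset.subset_set_image_iff.mp hTL
  have hB0 : (B : Set W) \ {0} = B := Set.sdiff_singleton_eq_self fun h => (hBL h).2 rfl
  have hlead : m.leadingIdeal Φ L = m.leadingIdeal Φ B := by
    unfold leadingIdeal Ideal.span
    rw [hT, hB0, Finset.coe_image]
  have hBL' : (B : Set W) ⊆ L := fun b hb => (hBL hb).1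
  refine ⟨B, hBL', le_antisymm (Submodule.span_le.mpr hBL') ?_, hlead⟩
  refine fun z hz => le_of_forall_exists_degree_eq (m := m) (Φ := Φ)
    (N := (Submodule.span W (B : Set W)).restrictScalars K) (L := L.restrictScalars K)
    (Submodule.span_le.mpr hBL') (fun x hx hx0 => ?_) hz
  have hmem : monomial (m.degree (Φ x)) (1 : K) ∈ m.leadingIdeal Φ B :=
    hlead ▸ Ideal.subset_span ⟨x, ⟨hx, hx0⟩, rfl⟩
  obtain ⟨b, hbB, hb0, hbx⟩ := exists_degree_le_of_monomial_mem_leadingIdeal hmem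
  set e := m.degree (Φ x) - m.degree (Φ b)
  obtain ⟨hdeg, hlc⟩ := m.degree_basis_mul Φ hmul e hb0
  refine ⟨Φ.symm (monomial e 1) * b,
    Submodule.smul_mem _ (Φ.symm (monomial e 1)) (Submodule.subset_span hbB), fun h0 => ?_, ?_⟩
  · rw [h0, map_zero, leadingCoeff_zero, eq_comm, m.leadingCoeff_eq_zero_iff] at hlc
    simp_all
  · rw [hdeg, tsub_add_cancel_of_le hbx]

end LeadingTerms

end MonomialOrder

theorem Finsupp.induction_single_one_add {ι : Type*} {motive : (ι →₀ ℕ) → Prop}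
    (f : ι →₀ ℕ) (zero : motive 0)
    (single_one_add : ∀ i f, motive f → motive (single i 1 + f)) : motive f := by
  induction f using Finsupp.induction with
  | zero => exact zero
  | single_add i k f _ hk ih =>
    clear hk
    induction k with
    | zero => simpa using ih
    | succ k ihk =>
      rw [add_comm k 1, Finsupp.single_add, add_assoc]
      exact single_one_add _ _ ihk

theorem List.prod_ofFn_pow_single_add {M : Type*} [Monoid M] {m : ℕ} {f : Fin m → M}
    (hf : ∀ i j, Commute (f i) (f j)) (j : Fin m) (τ : Fin m → ℕ) :
    (List.ofFn fun i => f i ^ (Pi.single j 1 + τ : Fin m → ℕ) i).prod =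
      f j * (List.ofFn fun i => f i ^ τ i).prod := by
  induction m with
  | zero => exact j.elim0
  | succ m ih =>
    simp only [List.ofFn_succ, List.prod_cons]
    cases j using Fin.cases with
    | zero => simp [pow_add, mul_assoc]
    | succ j =>
      have := ih (fun i j => hf i.succ j.succ) j (fun i => τ i.succ)
      simp only [Pi.add_apply, Pi.single_apply, Fin.succ_inj, (Fin.succ_ne_zero j).symm,
        if_false, zero_add] at this ⊢
      rw [this, ← mul_assoc, ((hf 0 j.succ).pow_left _).eq, mul_assoc]

section WeylAlgebra

variable {n : ℕ} {W : Type*} [Ring W] (K : Type*) [CommSemiring K] [Algebra K W]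
  {ξ dd : Fin n → W}

theorem nm_single_add_left (hξ : ∀ i j, Commute (ξ i) (ξ j)) (j : Fin n)
    (lam mu : Fin n → ℕ) : nm ξ dd (Pi.single j 1 + lam) mu = ξ j * nm ξ dd lam mu := by
  rw [nm, nm, List.prod_ofFn_pow_single_add hξ, mul_assoc]

theorem nm_single_add_right (hdd : ∀ i j, Commute (dd i) (dd j)) (j : Fin n)
    (lam mu : Fin n → ℕ) : nm ξ dd lam (Pi.single j 1 + mu) = nm ξ dd lam mu * dd j := by
  have hcomm : Commute (dd j) (List.ofFn fun i => dd i ^ mu i).prod :=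
    Commute.list_prod_right _ _ fun x hx => by
      obtain ⟨i, rfl⟩ := List.mem_ofFn.mp hx
      exact (hdd j i).pow_right _
  rw [nm, nm, List.prod_ofFn_pow_single_add hdd, hcomm.eq, mul_assoc]

variable (ξ dd) in
def weylMonomial (c : (Fin n ⊕ Fin n) →₀ ℕ) : W :=
  nm ξ dd (fun i => c (Sum.inl i)) (fun i => c (Sum.inr i))

@[simp]
theorem weylMonomial_zero : weylMonomial ξ dd 0 = 1 := by
  simp [weylMonomial, nm]

theorem weylMonomial_single_inl_add (hξ : ∀ i j, Commute (ξ i) (ξ j)) (j : Fin n)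
    (t : (Fin n ⊕ Fin n) →₀ ℕ) :
    weylMonomial ξ dd (Finsupp.single (Sum.inl j) 1 + t) = ξ j * weylMonomial ξ dd t := by
  set s : (Fin n ⊕ Fin n) →₀ ℕ := Finsupp.single (Sum.inl j) 1 + t
  have hl : (fun i => s (Sum.inl i)) = Pi.single j 1 + fun i => t (Sum.inl i) := by
    ext i
    simp [s, Finsupp.single_apply, Pi.single_apply, eq_comm]
  have hr : (fun i => s (Sum.inr i)) = fun i => t (Sum.inr i) := by
    ext i
    simp [s]
  rw [weylMonomial, hl, hr, nm_single_add_left hξ]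
  rfl

theorem weylMonomial_single_inr_add (hdd : ∀ i j, Commute (dd i) (dd j)) (j : Fin n)
    (t : (Fin n ⊕ Fin n) →₀ ℕ) :
    weylMonomial ξ dd (Finsupp.single (Sum.inr j) 1 + t) = weylMonomial ξ dd t * dd j := by
  set s : (Fin n ⊕ Fin n) →₀ ℕ := Finsupp.single (Sum.inr j) 1 + t
  have hl : (fun i => s (Sum.inl i)) = fun i => t (Sum.inl i) := by
    ext i
    simp [s]
  have hr : (fun i => s (Sum.inr i)) = Pi.single j 1 + fun i => t (Sum.inr i) := by
    ext i
    simp [s, Finsupp.single_apply, Pi.single_apply, eq_comm]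
  rw [weylMonomial, hl, hr, nm_single_add_right hdd]
  rfl

variable (ξ dd) in
def weylSpanBelow (s : (Fin n ⊕ Fin n) →₀ ℕ) : Submodule K W :=
  Submodule.span K (weylMonomial ξ dd '' Set.Iio s)

variable {K} {s t : (Fin n ⊕ Fin n) →₀ ℕ}

theorem weylMonomial_mem_weylSpanBelow {c : (Fin n ⊕ Fin n) →₀ ℕ} (h : c < s) :
    weylMonomial ξ dd c ∈ weylSpanBelow K ξ dd s :=
  Submodule.subset_span ⟨c, h, rfl⟩

theorem weylSpanBelow_mono (h : s ≤ t) : weylSpanBelow K ξ dd s ≤ weylSpanBelow K ξ dd t :=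
  Submodule.span_mono (Set.image_mono (Set.Iio_subset_Iio h))

theorem map_mem_weylSpanBelow (T : W →ₗ[K] W)
    (hT : ∀ c < s, T (weylMonomial ξ dd c) ∈ weylSpanBelow K ξ dd t) {x : W}
    (hx : x ∈ weylSpanBelow K ξ dd s) : T x ∈ weylSpanBelow K ξ dd t := by
  have : (weylSpanBelow K ξ dd s).map T ≤ weylSpanBelow K ξ dd t := by
    rw [weylSpanBelow, Submodule.map_span_le]
    rintro _ ⟨c, hc, rfl⟩
    exact hT c hc
  exact this (Submodule.mem_map_of_mem hx)

theorem xi_mul_mem_weylSpanBelow (hξ : ∀ i j, Commute (ξ i) (ξ j)) (j : Fin n) {x : W}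
    (hx : x ∈ weylSpanBelow K ξ dd s) :
    ξ j * x ∈ weylSpanBelow K ξ dd (Finsupp.single (Sum.inl j) 1 + s) :=
  map_mem_weylSpanBelow (LinearMap.mulLeft K (ξ j)) (fun c hc => by
    rw [LinearMap.mulLeft_apply, ← weylMonomial_single_inl_add hξ]
    exact weylMonomial_mem_weylSpanBelow (add_lt_add_right hc _)) hx

theorem mul_dd_mem_weylSpanBelow (hdd : ∀ i j, Commute (dd i) (dd j)) (j : Fin n) {x : W}
    (hx : x ∈ weylSpanBelow K ξ dd s) :
    x * dd j ∈ weylSpanBelow K ξ dd (Finsupp.single (Sum.inr j) 1 + s) :=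
  map_mem_weylSpanBelow (LinearMap.mulRight K (dd j)) (fun c hc => by
    rw [LinearMap.mulRight_apply, ← weylMonomial_single_inr_add hdd]
    exact weylMonomial_mem_weylSpanBelow (add_lt_add_right hc _)) hx

variable (K) in
theorem dd_mul_weylMonomial_sub_mem (hξ : ∀ i j, Commute (ξ i) (ξ j))
    (hdd : ∀ i j, Commute (dd i) (dd j))
    (hrel : ∀ i j, dd i * ξ j - ξ j * dd i = if i = j then (1 : W) else 0) (i : Fin n)
    (t : (Fin n ⊕ Fin n) →₀ ℕ) :
    dd i * weylMonomial ξ dd t - weylMonomial ξ dd (Finsupp.single (Sum.inr i) 1 + t) ∈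
      weylSpanBelow K ξ dd (Finsupp.single (Sum.inr i) 1 + t) := by
  induction t using Finsupp.induction_single_one_add with
  | zero =>
    rw [weylMonomial_single_inr_add hdd, weylMonomial_zero, one_mul, mul_one, sub_self]
    exact zero_mem _
  | single_one_add k t ih =>
    set e := Finsupp.single (Sum.inr i) 1
    rcases k with j | j
    · have hswap := add_left_comm e (Finsupp.single (Sum.inl j) 1) t
      have hcomm : dd i * ξ j = ξ j * dd i + if i = j then 1 else 0 :=
        sub_eq_iff_eq_add'.mp (hrel i j)
      have key : dd i * weylMonomial ξ dd (Finsupp.single (Sum.inl j) 1 + t) -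
            weylMonomial ξ dd (e + (Finsupp.single (Sum.inl j) 1 + t)) =
          ξ j * (dd i * weylMonomial ξ dd t - weylMonomial ξ dd (e + t)) +
            (if i = j then 1 else 0) * weylMonomial ξ dd t := by
        rw [hswap, weylMonomial_single_inl_add hξ, weylMonomial_single_inl_add hξ, ← mul_assoc,
          hcomm, mul_sub]
        noncomm_ring
      rw [key, hswap]
      refine add_mem (xi_mul_mem_weylSpanBelow hξ j ih) ?_
      split_ifs
      · rw [one_mul, ← add_assoc]
        exact weylMonomial_mem_weylSpanBelow (lt_add_of_pos_left t (pos_iff_ne_zero.mpr (by simp)))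
      · rw [zero_mul]
        exact zero_mem _
    · rw [add_left_comm e, weylMonomial_single_inr_add hdd j t, weylMonomial_single_inr_add hdd j,
        ← mul_assoc, ← sub_mul]
      exact mul_dd_mem_weylSpanBelow hdd j ih

variable (K) in
theorem weylMonomial_mul_sub_mem (hξ : ∀ i j, Commute (ξ i) (ξ j))
    (hdd : ∀ i j, Commute (dd i) (dd j))
    (hrel : ∀ i j, dd i * ξ j - ξ j * dd i = if i = j then (1 : W) else 0)
    (a b : (Fin n ⊕ Fin n) →₀ ℕ) :
    weylMonomial ξ dd a * weylMonomial ξ dd b - weylMonomial ξ dd (a + b) ∈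
      weylSpanBelow K ξ dd (a + b) := by
  induction a using Finsupp.induction_single_one_add generalizing b with
  | zero => simp
  | single_one_add k a ih =>
    rcases k with j | j
    · rw [weylMonomial_single_inl_add hξ, add_assoc, weylMonomial_single_inl_add hξ, mul_assoc,
        ← mul_sub]
      exact xi_mul_mem_weylSpanBelow hξ j (ih b)
    · set e := Finsupp.single (Sum.inr j) 1
      have hab : e + a + b = a + (e + b) := by rw [add_comm e a, add_assoc]
      have hmul : ∀ x ∈ weylSpanBelow K ξ dd (e + b),
          weylMonomial ξ dd a * x ∈ weylSpanBelow K ξ dd (a + (e + b)) := fun x hx =>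
        map_mem_weylSpanBelow (LinearMap.mulLeft K (weylMonomial ξ dd a)) (fun c hc => by
          rw [LinearMap.mulLeft_apply, ← sub_add_cancel (weylMonomial ξ dd a * weylMonomial ξ dd c)
            (weylMonomial ξ dd (a + c))]
          exact add_mem (weylSpanBelow_mono (by gcongr) (ih c))
            (weylMonomial_mem_weylSpanBelow (add_lt_add_right hc _))) hx
      have key :
          weylMonomial ξ dd (e + a) * weylMonomial ξ dd b - weylMonomial ξ dd (e + a + b) =
          weylMonomial ξ dd a * (dd j * weylMonomial ξ dd b - weylMonomial ξ dd (e + b)) +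
            (weylMonomial ξ dd a * weylMonomial ξ dd (e + b) -
              weylMonomial ξ dd (a + (e + b))) := by
        rw [weylMonomial_single_inr_add hdd, hab]
        noncomm_ring
      rw [key, hab]
      exact add_mem (hmul _ (dd_mul_weylMonomial_sub_mem K hξ hdd hrel j b)) (ih _)

end WeylAlgebra

section NormalOrderings

variable {K : Type*} [Field K] {n : ℕ} {W : Type*} [Ring W] [Algebra K W] {ξ dd : Fin n → W}
  {Φ : W ≃ₗ[K] MvPolynomial (Fin n ⊕ Fin n) K}

theorem expof_inl_inr (c : (Fin n ⊕ Fin n) →₀ ℕ) :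
    expof (fun i => c (Sum.inl i)) (fun i => c (Sum.inr i)) = c := by
  ext (i | i) <;> rfl

theorem map_weylSpanBelow (hΦ : ∀ c, Φ (weylMonomial ξ dd c) = monomial c 1)
    (s : (Fin n ⊕ Fin n) →₀ ℕ) :
    (weylSpanBelow K ξ dd s).map Φ.toLinearMap = restrictSupport K (Set.Iio s) := by
  rw [weylSpanBelow, Submodule.map_span, restrictSupport_eq_span, Set.image_image]
  simp [hΦ]

theorem weyl_basis_mul_sub_monomial_mem (hξ : ∀ i j, Commute (ξ i) (ξ j))
    (hdd : ∀ i j, Commute (dd i) (dd j))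
    (hrel : ∀ i j, dd i * ξ j - ξ j * dd i = if i = j then (1 : W) else 0)
    (hΦ : ∀ c, Φ (weylMonomial ξ dd c) = monomial c 1) (m : MonomialOrder (Fin n ⊕ Fin n))
    (a b : (Fin n ⊕ Fin n) →₀ ℕ) :
    Φ (Φ.symm (monomial a 1) * Φ.symm (monomial b 1)) - monomial (a + b) 1 ∈
      restrictSupport K {c | c ≺[m] a + b} := by
  have hsymm : ∀ c, Φ.symm (monomial c 1) = weylMonomial ξ dd c := fun c =>
    Φ.symm_apply_eq.mpr (hΦ c).symm
  have hmem := Submodule.mem_map_of_mem (f := Φ.toLinearMap)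
    (weylMonomial_mul_sub_mem K hξ hdd hrel a b)
  rw [map_weylSpanBelow hΦ] at hmem
  rw [hsymm, hsymm, ← hΦ, ← map_sub]
  exact restrictSupport_mono (R := K) (t := {c | c ≺[m] a + b})
    (fun c (hc : c < a + b) => m.toSyn_strictMono hc) hmem

variable (ξ dd) in
theorem isTotalOrdering_rD (hΦ : ∀ c, Φ (weylMonomial ξ dd c) = monomial c 1)
    (r : TO ↥(NormalMonomials ξ dd)) : IsTotalOrdering (rD ξ dd r) := by
  refine ⟨fun c d hcd hdc => ?_, fun _ _ _ => r.2.2.1 _ _ _, fun _ _ => r.2.2.2 _ _⟩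
  have h : weylMonomial ξ dd c = weylMonomial ξ dd d :=
    congrArg Subtype.val (r.2.1 _ _ hcd hdc)
  simpa [hΦ] using congrArg Φ h

theorem IsNormalOrdering.rD_add_right {r : TO ↥(NormalMonomials ξ dd)}
    (hr : IsNormalOrdering ξ dd r) (c d : (Fin n ⊕ Fin n) →₀ ℕ) (h : rD ξ dd r c d)
    (t : (Fin n ⊕ Fin n) →₀ ℕ) : rD ξ dd r (c + t) (d + t) :=
  hr.2 _ _ _ _ _ _ h

theorem IsNormalOrdering.rD_zero_left {r : TO ↥(NormalMonomials ξ dd)}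
    (hr : IsNormalOrdering ξ dd r) (c : (Fin n ⊕ Fin n) →₀ ℕ) : rD ξ dd r 0 c :=
  hr.1 _ _

variable {r : TO ↥(NormalMonomials ξ dd)} {m : MonomialOrder (Fin n ⊕ Fin n)}

theorem isLTerm_iff (hm : ∀ c d, c ≼[m] d ↔ rD ξ dd r c d) {w : W}
    {d : (Fin n ⊕ Fin n) →₀ ℕ} :
    IsLTerm ξ dd Φ r w d ↔ w ≠ 0 ∧ m.degree (Φ w) = d := by
  constructor
  · rintro ⟨hd, hmax⟩
    have hw : Φ w ≠ 0 := fun h => by simp [h] at hd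
    refine ⟨by simpa using hw, m.toSyn.injective (le_antisymm ?_ (m.le_degree hd))⟩
    exact m.degree_le_iff.mpr fun c hc => (hm c d).mpr (hmax c hc)
  · rintro ⟨hw, rfl⟩
    exact ⟨m.degree_mem_support (by simpa using hw), fun c hc => (hm _ _).mp (m.le_degree hc)⟩

theorem ltIdeal_eq_leadingIdeal (hm : ∀ c d, c ≼[m] d ↔ rD ξ dd r c d) (S : Set W) :
    LTIdeal ξ dd Φ r S = m.leadingIdeal Φ S := by
  unfold LTIdeal MonomialOrder.leadingIdeal
  congr 1
  ext p
  simp only [isLTerm_iff hm]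
  constructor
  · rintro ⟨x, hx, hx0, _, ⟨-, rfl⟩, rfl⟩
    exact ⟨x, ⟨hx, hx0⟩, rfl⟩
  · rintro ⟨x, ⟨hx, hx0⟩, rfl⟩
    exact ⟨x, hx, hx0, _, ⟨hx0, rfl⟩, rfl⟩

end NormalOrderings

theorem exists_groebnerBasis_general
    {K : Type*} [Field K] {n : ℕ}
    {W : Type*} [Ring W] [Algebra K W] (ξ dd : Fin n → W)
    (hξcomm : ∀ i j, ξ i * ξ j = ξ j * ξ i)
    (hddcomm : ∀ i j, dd i * dd j = dd j * dd i)
    (hrel : ∀ i j, dd i * ξ j - ξ j * dd i = if i = j then (1 : W) else 0)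
    (Φ : W ≃ₗ[K] MvPolynomial (Fin n ⊕ Fin n) K)
    (hΦ : ∀ lam mu, Φ (nm ξ dd lam mu) = MvPolynomial.monomial (expof lam mu) 1)
    (r : TO ↥(NormalMonomials ξ dd)) (hr : IsNormalOrdering ξ dd r)
    (L : Submodule W W) :
    ∃ B : Finset W, IsGroebnerBasis ξ dd Φ r L B := by
  have hΦ' : ∀ c, Φ (weylMonomial ξ dd c) = monomial c 1 := fun c => by
    rw [weylMonomial, hΦ, expof_inl_inr]
  have hr_total := isTotalOrdering_rD ξ dd hΦ' r
  let m := MonomialOrder.ofIsTotalOrdering hr_total hr.rD_add_right hr.rD_zero_left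
  have hm : ∀ c d, c ≼[m] d ↔ rD ξ dd r c d := fun _ _ =>
    MonomialOrder.ofIsTotalOrdering_le_iff hr_total hr.rD_add_right hr.rD_zero_left
  obtain ⟨B, hBL, hspan, hlead⟩ := m.exists_finset_span_eq_and_leadingIdeal_eq Φ
    (weyl_basis_mul_sub_monomial_mem hξcomm hddcomm hrel hΦ' m) L
  rw [← ltIdeal_eq_leadingIdeal hm, ← ltIdeal_eq_leadingIdeal hm] at hlead
  exact ⟨B, hBL, hspan, hlead⟩

/-- every left ideal `L` of `W` admits a Gröbner basis with respect to any
normal ordering `≼` of `W`. -/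
theorem exists_groebnerBasis
    {K : Type*} [Field K] [CharZero K] {n : ℕ} (hn : 1 ≤ n)
    {W : Type*} [Ring W] [Algebra K W] (ξ dd : Fin n → W)
    (hξcomm : ∀ i j, ξ i * ξ j = ξ j * ξ i)
    (hddcomm : ∀ i j, dd i * dd j = dd j * dd i)
    (hrel : ∀ i j, dd i * ξ j - ξ j * dd i = if i = j then (1 : W) else 0)
    (Φ : W ≃ₗ[K] MvPolynomial (Fin n ⊕ Fin n) K)
    (hΦ : ∀ lam mu, Φ (nm ξ dd lam mu) = MvPolynomial.monomial (expof lam mu) 1)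
    (r : TO ↥(NormalMonomials ξ dd)) (hr : IsNormalOrdering ξ dd r)
    (L : Submodule W W) :
    ∃ B : Finset W, IsGroebnerBasis ξ dd Φ r L B :=
  exists_groebnerBasis_general ξ dd hξcomm hddcomm hrel Φ hΦ r hr L
end

section
/- Division theorem in the Weyl algebra: let w ∈ W, let F be a finite subset of W, let ≼ be a normal ordering of W, and let ≤ be the induced monomial ordering of K[X,Y]. Then there exist r ∈ W and a family (q_f)_{f∈F} of elements of W such that: (a) w = Σ_{f∈F} q_f f + r; (b) for every nonzero f ∈ F and every normal monomial s in the support of r, LT_≼(f) does not divide Φ(s) in K[X,Y]; (c) if w ≠ 0, then for every f ∈ F with q_f f ≠ 0 one has LT_≼(q_f f) ≤ LT_≼(w). -/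
open MvPolynomial

/-!
Reordering with `∂ᵢξᵢ = ξᵢ∂ᵢ + 1` shows that `ξ^λ∂^μ · ξ^ρ∂^σ` is `ξ^{λ+ρ}∂^{μ+σ}` plus a
`K`-combination of normal monomials with componentwise smaller exponents. Hence, for every monomial
order, left multiplication by `ξ^α∂^β` acts on leading terms as multiplication by `X^αY^β` does.
A normal ordering is such a monomial order: it is compatible with adding exponents and has `1` as
least element, so it is a well order by Dickson's lemma. The usual division algorithm then goes
through: either the leading monomial of `w` is divisible by some `LT(f)`, and subtracting a scalar
multiple of `ξ^α∂^β f` cancels it, or it is moved to the remainder; in both cases the leading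
monomial of what is left to divide strictly decreases.
-/

open scoped MonomialOrder

namespace MonomialOrder

variable {σ R : Type*} (m : MonomialOrder σ)

theorem degree_eq_and_leadingCoeff_eq_of_lt [CommRing R] {p q : MvPolynomial σ R}
    (hlt : ∀ x ∈ (q - p).support, x ≺[m] m.degree p) :
    m.degree q = m.degree p ∧ m.leadingCoeff q = m.leadingCoeff p := by
  by_cases h : q - p = 0
  · rw [sub_eq_zero.mp h]; exact ⟨rfl, rfl⟩
  have hlt' : m.degree (q - p) ≺[m] m.degree p := hlt _ (m.degree_mem_support h)
  rw [← sub_add_cancel q p, add_comm]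
  exact ⟨m.degree_add_of_lt hlt', m.leadingCoeff_add_of_lt hlt'⟩

theorem withBotDegree_sub_lt [CommRing R] {p q : MvPolynomial σ R} (hp : p ≠ 0)
    (hdeg : m.degree q = m.degree p) (hlc : m.leadingCoeff q = m.leadingCoeff p) :
    m.withBotDegree (p - q) ≺'[m] m.withBotDegree p := by
  rw [withBotDegree_lt_withBotDegree_iff]
  by_cases h : p - q = 0
  · exact Or.inr ⟨h, hp⟩
  refine Or.inl (lt_of_le_of_ne ?_ fun heq => ?_)
  · simpa [hdeg] using m.degree_sub_le (f := p) (g := q)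
  · have hmem := m.degree_mem_support h
    rw [m.toSyn.injective heq, mem_support_iff, coeff_sub] at hmem
    exact hmem (by rw [← leadingCoeff, ← hdeg, ← leadingCoeff, hlc, sub_self])

theorem degree_le_of_withBotDegree_lt [CommSemiring R] {p q : MvPolynomial σ R}
    (h : m.withBotDegree p ≺'[m] m.withBotDegree q) : m.degree p ≼[m] m.degree q := by
  rcases (m.withBotDegree_lt_withBotDegree_iff _ _).mp h with h | ⟨rfl, -⟩
  · exact h.le
  · simp

theorem leadingCoeff_smul_of_isRegular [CommSemiring R] {c : R} (hc : IsRegular c)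
    (p : MvPolynomial σ R) : m.leadingCoeff (c • p) = c * m.leadingCoeff p := by
  simp only [leadingCoeff, m.degree_smul_of_isRegular hc, coeff_smul, smul_eq_mul]

end MonomialOrder

section DivisionAlgorithm

open MonomialOrder

variable {K σ A : Type*} [Field K] [Ring A] [Algebra K A]
  (Φ : A ≃ₗ[K] MvPolynomial σ K) (m : MonomialOrder σ) {M : (σ →₀ ℕ) → A}

theorem eq_sum_coeff_smul_of_map_eq_monomial (hΦM : ∀ d, Φ (M d) = monomial d 1) (a : A) :
    a = ∑ d ∈ (Φ a).support, (Φ a).coeff d • M d := by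
  apply Φ.injective
  simp only [map_sum, map_smul, hΦM, smul_monomial, smul_eq_mul, mul_one]
  exact (Φ a).as_sum

variable (hΦM : ∀ d, Φ (M d) = monomial d 1)
  (hM : ∀ e d, ∀ x ∈ (Φ (M e * M d) - monomial (e + d) 1).support, x ≺[m] e + d)
include hΦM hM

theorem support_map_mul_sub_monomial_mul_lt (e : σ →₀ ℕ) (a : A) :
    ∀ x ∈ (Φ (M e * a) - monomial e 1 * Φ a).support, x ≺[m] e + m.degree (Φ a) := by
  classical
  have hsum : Φ (M e * a) - monomial e 1 * Φ a =
      ∑ d ∈ (Φ a).support, (Φ a).coeff d • (Φ (M e * M d) - monomial (e + d) 1) := by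
    conv_lhs => rw [eq_sum_coeff_smul_of_map_eq_monomial Φ hΦM a]
    simp only [Finset.mul_sum, mul_smul_comm, map_sum, map_smul, hΦM, monomial_mul, one_mul,
      smul_sub, Finset.sum_sub_distrib]
  intro x hx
  rw [hsum] at hx
  obtain ⟨d, hd, hxd⟩ := Finset.mem_biUnion.mp (support_sum hx)
  calc m.toSyn x < m.toSyn (e + d) := hM e d x (support_smul hxd)
    _ ≤ m.toSyn (e + m.degree (Φ a)) := by
      rw [map_add, map_add]
      gcongr
      exact m.le_degree hd

theorem degree_map_mul_eq_and_leadingCoeff_map_mul_eq (e : σ →₀ ℕ) {a : A} (ha : a ≠ 0) :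
    m.degree (Φ (M e * a)) = e + m.degree (Φ a) ∧
      m.leadingCoeff (Φ (M e * a)) = m.leadingCoeff (Φ a) := by
  classical
  have hΦa : Φ a ≠ 0 := by simpa using ha
  have hmon : monomial e (1 : K) ≠ 0 := by simp
  have hdeg : m.degree (monomial e 1 * Φ a) = e + m.degree (Φ a) := by
    rw [m.degree_mul hmon hΦa, m.degree_monomial, if_neg one_ne_zero]
  have hlc : m.leadingCoeff (monomial e 1 * Φ a) = m.leadingCoeff (Φ a) := by
    rw [m.leadingCoeff_mul, m.leadingCoeff_monomial, one_mul]
  rw [← hdeg, ← hlc]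
  exact m.degree_eq_and_leadingCoeff_eq_of_lt
    (hdeg ▸ support_map_mul_sub_monomial_mul_lt Φ m hΦM hM e a)

theorem exists_withBotDegree_map_sub_mul_lt {w f : A} (hw : w ≠ 0) (hf : f ≠ 0)
    (hle : m.degree (Φ f) ≤ m.degree (Φ w)) :
    ∃ u : A, m.withBotDegree (Φ (w - u * f)) ≺'[m] m.withBotDegree (Φ w) ∧
      m.degree (Φ (u * f)) = m.degree (Φ w) := by
  have hΦw : Φ w ≠ 0 := by simpa using hw
  have hlcf : m.leadingCoeff (Φ f) ≠ 0 := m.leadingCoeff_ne_zero_iff.mpr (by simpa using hf)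
  set c := m.leadingCoeff (Φ w) / m.leadingCoeff (Φ f)
  have hc : IsRegular c := .of_ne_zero (div_ne_zero (m.leadingCoeff_ne_zero_iff.mpr hΦw) hlcf)
  set e := m.degree (Φ w) - m.degree (Φ f)
  obtain ⟨hdeg, hlc⟩ := degree_map_mul_eq_and_leadingCoeff_map_mul_eq Φ m hΦM hM e hf
  rw [tsub_add_cancel_of_le hle] at hdeg
  have hΦu : Φ ((c • M e) * f) = c • Φ (M e * f) := by rw [smul_mul_assoc, map_smul]
  have hdeg' : m.degree (Φ ((c • M e) * f)) = m.degree (Φ w) := by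
    rw [hΦu, m.degree_smul_of_isRegular hc, hdeg]
  refine ⟨c • M e, ?_, hdeg'⟩
  rw [map_sub]
  refine m.withBotDegree_sub_lt hΦw hdeg' ?_
  rw [hΦu, m.leadingCoeff_smul_of_isRegular hc, hlc, div_mul_cancel₀ _ hlcf]

theorem exists_div_of_support_map_mul_sub_lt (F : Finset A) (w : A) :
    ∃ (rem : A) (q : A → A), w = ∑ f ∈ F, q f * f + rem ∧
      (∀ f ∈ F, f ≠ 0 → ∀ s ∈ (Φ rem).support, ¬ m.degree (Φ f) ≤ s) ∧
      ∀ f ∈ F, m.degree (Φ (q f * f)) ≼[m] m.degree (Φ w) := by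
  classical
  induction hD : m.toWithBotSyn (m.withBotDegree (Φ w)) using WellFoundedLT.induction
    generalizing w with
  | ind D ih =>
  subst hD
  by_cases hw : w = 0
  · exact ⟨0, 0, by simp [hw], by simp, by simp⟩
  by_cases hred : ∃ f ∈ F, f ≠ 0 ∧ m.degree (Φ f) ≤ m.degree (Φ w)
  · obtain ⟨f, hfF, hf, hle⟩ := hred
    obtain ⟨u, hlt, hdeg⟩ := exists_withBotDegree_map_sub_mul_lt Φ m hΦM hM hw hf hle
    obtain ⟨rem, q, hsum, hrem, hq⟩ := ih _ hlt (w - u * f) rfl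
    refine ⟨rem, q + Pi.single f u, ?_, hrem, fun g hg => ?_⟩
    · simp only [Pi.add_apply, add_mul, Finset.sum_add_distrib, Pi.single_apply, ite_mul,
        zero_mul, Finset.sum_ite_eq', if_pos hfF]
      rw [add_right_comm, ← hsum, sub_add_cancel]
    · rw [Pi.add_apply, add_mul, map_add]
      refine m.degree_add_le.trans
        (sup_le ((hq g hg).trans (m.degree_le_of_withBotDegree_lt hlt)) ?_)
      rcases eq_or_ne g f with rfl | hgf
      · rw [Pi.single_eq_same, hdeg]
      · simp [Pi.single_eq_of_ne hgf]
  · push Not at hred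
    have hΦw : Φ w ≠ 0 := by simpa using hw
    set t := Φ.symm (m.leadingTerm (Φ w))
    have hlt : m.withBotDegree (Φ (w - t)) ≺'[m] m.withBotDegree (Φ w) := by
      rw [map_sub, Φ.apply_symm_apply]
      exact m.withBotDegree_sub_lt hΦw (m.degree_leadingTerm _) (m.leadingCoeff_leadingTerm _)
    obtain ⟨rem, q, hsum, hrem, hq⟩ := ih _ hlt (w - t) rfl
    refine ⟨rem + t, q, by rw [← add_assoc, ← hsum, sub_add_cancel], ?_,
      fun g hg => (hq g hg).trans (m.degree_le_of_withBotDegree_lt hlt)⟩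
    intro f hfF hf s hs
    rw [map_add, Φ.apply_symm_apply] at hs
    rcases Finset.mem_union.mp (support_add hs) with hs | hs
    · exact hrem f hfF hf s hs
    · rw [Finset.mem_singleton.mp (support_monomial_subset hs)]
      exact hred f hfF hf

end DivisionAlgorithm

noncomputable abbrev TO.toLinearOrder {S : Type*} (r : TO S) : LinearOrder S where
  le := r.rel
  le_refl a := (r.2.2.2 a a).elim id id
  le_trans := r.2.2.1
  le_antisymm := r.2.1
  le_total := r.2.2.2
  toDecidableLE := Classical.decRel _

noncomputable def MonomialOrder.ofEquiv {σ T : Type*} [Finite σ] [LinearOrder T]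
    (e : (σ →₀ ℕ) ≃ T) (add_le_add : ∀ a b c, e a ≤ e b → e (a + c) ≤ e (b + c))
    (zero_le : ∀ a, e 0 ≤ e a) : MonomialOrder σ :=
  letI := e.symm.addCommMonoid
  have mono : Monotone e := fun a b h => by
    obtain ⟨c, rfl⟩ := exists_add_of_le h
    simpa only [zero_add, add_comm a] using add_le_add 0 c a (zero_le c)
  { syn := T
    toSyn := e.symm.addEquiv.symm
    toSyn_monotone := mono
    isOrderedAddMonoid_syn := by
      refine ⟨fun a b h c => ?_, fun a b h c => ?_⟩ <;>
      · obtain ⟨a, rfl⟩ := e.surjective a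
        obtain ⟨b, rfl⟩ := e.surjective b
        obtain ⟨c, rfl⟩ := e.surjective c
        simp only [Equiv.add_def, Equiv.symm_symm, Equiv.symm_apply_apply]
        simpa only [add_comm c] using add_le_add a b c h
    wellFoundedLT_syn :=
      (mono.wellQuasiOrderedLE_of_wellQuasiOrderedLE_of_surjective e.surjective).to_wellFoundedLT }

section InducedMonomialOrder

variable {K : Type*} [Field K] {n : ℕ} {W : Type*} [Ring W] [Algebra K W] {ξ dd : Fin n → W}
  {r : TO ↥(NormalMonomials ξ dd)}

theorem expof_split (d : (Fin n ⊕ Fin n) →₀ ℕ) :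
    expof (fun i => d (Sum.inl i)) (fun i => d (Sum.inr i)) = d := by
  ext (i | i) <;> rfl

variable {Φ : W ≃ₗ[K] MvPolynomial (Fin n ⊕ Fin n) K}
  (hΦ : ∀ lam mu, Φ (nm ξ dd lam mu) = monomial (expof lam mu) 1)
include hΦ

theorem map_nmD (d : (Fin n ⊕ Fin n) →₀ ℕ) : Φ (nmD ξ dd d) = monomial d 1 := by
  rw [nmD, nmEl, hΦ, expof_split]

theorem nmD_bijective : Function.Bijective (nmD ξ dd) := by
  refine ⟨fun d e h => ?_, fun ⟨_, lam, mu, hw⟩ => ⟨expof lam mu, Subtype.ext hw.symm⟩⟩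
  have := congrArg (fun x : NormalMonomials ξ dd => Φ x) h
  simp only [map_nmD hΦ] at this
  exact monomial_left_injective one_ne_zero this

noncomputable def inducedMonomialOrder (hr : IsNormalOrdering ξ dd r) :
    MonomialOrder (Fin n ⊕ Fin n) :=
  letI := r.toLinearOrder
  .ofEquiv (.ofBijective _ (nmD_bijective hΦ)) (fun _ _ _ h => hr.2 _ _ _ _ _ _ h)
    (fun _ => hr.1 _ _)

theorem inducedMonomialOrder_toSyn_le_iff (hr : IsNormalOrdering ξ dd r)
    {d e : (Fin n ⊕ Fin n) →₀ ℕ} :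
    (inducedMonomialOrder hΦ hr).toSyn d ≤ (inducedMonomialOrder hΦ hr).toSyn e ↔ rD ξ dd r d e :=
  Iff.rfl

theorem IsLTerm.degree_eq (hr : IsNormalOrdering ξ dd r) {w : W} {d : (Fin n ⊕ Fin n) →₀ ℕ}
    (h : IsLTerm ξ dd Φ r w d) : (inducedMonomialOrder hΦ hr).degree (Φ w) = d := by
  set m := inducedMonomialOrder hΦ hr
  refine m.toSyn.injective (le_antisymm ?_ (m.le_degree h.1))
  exact (inducedMonomialOrder_toSyn_le_iff hΦ hr).mpr
    (h.2 _ (m.degree_mem_support (ne_zero_iff.mpr ⟨d, mem_support_iff.mp h.1⟩)))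

end InducedMonomialOrder

section PowProd

variable {W : Type*} [Ring W] {n : ℕ}

def powProd (x : Fin n → W) (a : Fin n → ℕ) : W := (List.ofFn fun i => x i ^ a i).prod

theorem nm_eq_powProd_mul_powProd (ξ dd : Fin n → W) (a b : Fin n → ℕ) :
    nm ξ dd a b = powProd ξ a * powProd dd b :=
  rfl

theorem Commute.powProd_right {x : Fin n → W} {a : Fin n → ℕ} {z : W}
    (h : ∀ i, Commute z (x i ^ a i)) : Commute z (powProd x a) :=
  Commute.list_prod_right _ _ fun _ hy => by
    obtain ⟨i, rfl⟩ := List.mem_ofFn.mp hy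
    exact h i

@[simp]
theorem powProd_zero (x : Fin n → W) : powProd x 0 = 1 := by
  simp [powProd]

theorem powProd_succ (x : Fin (n + 1) → W) (a : Fin (n + 1) → ℕ) :
    powProd x a = x 0 ^ a 0 * powProd (x ∘ Fin.succ) (a ∘ Fin.succ) := by
  simp [powProd, List.ofFn_succ]

theorem powProd_add {x : Fin n → W} (hx : ∀ i j, Commute (x i) (x j)) (a b : Fin n → ℕ) :
    powProd x (a + b) = powProd x a * powProd x b := by
  induction n with
  | zero => simp [powProd]
  | succ n ih =>
    have hc : Commute (x 0 ^ b 0) (powProd (x ∘ Fin.succ) (a ∘ Fin.succ)) :=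
      Commute.powProd_right fun i => (hx 0 i.succ).pow_pow _ _
    rw [powProd_succ, powProd_succ x a, powProd_succ x b, Pi.add_apply, pow_add,
      show (a + b) ∘ Fin.succ = a ∘ Fin.succ + b ∘ Fin.succ from rfl,
      ih (x := x ∘ Fin.succ) (fun i j => hx _ _), mul_assoc, mul_assoc,
      ← mul_assoc (x 0 ^ b 0), hc.eq, mul_assoc]

theorem powProd_single (x : Fin n → W) (i : Fin n) (k : ℕ) :
    powProd x (Pi.single i k) = x i ^ k := by
  induction n with
  | zero => exact i.elim0
  | succ n ih =>
    rw [powProd_succ]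
    induction i using Fin.cases with
    | zero =>
      have : (Pi.single 0 k : Fin (n + 1) → ℕ) ∘ Fin.succ = 0 := by
        funext j; simp [Fin.succ_ne_zero]
      rw [this, powProd_zero, mul_one, Pi.single_eq_same]
    | succ i =>
      have : (Pi.single i.succ k : Fin (n + 1) → ℕ) ∘ Fin.succ = Pi.single i k := by
        funext j; simp [Pi.single_apply, Fin.succ_inj]
      rw [Pi.single_eq_of_ne (Fin.succ_ne_zero i).symm, this, pow_zero, one_mul, ih]
      rfl

end PowProd

section WeylRelations

variable {W : Type*} [Ring W] {n : ℕ} {ξ dd : Fin n → W}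
  (hrel : ∀ i j, dd i * ξ j - ξ j * dd i = if i = j then (1 : W) else 0)
include hrel

theorem commute_dd_ξ_of_ne {i j : Fin n} (h : i ≠ j) : Commute (dd i) (ξ j) :=
  sub_eq_zero.mp ((hrel i j).trans (if_neg h))

theorem dd_mul_ξ_pow_succ (i : Fin n) (k : ℕ) :
    dd i * ξ i ^ (k + 1) = ξ i ^ (k + 1) * dd i + (k + 1) • ξ i ^ k := by
  have h1 : dd i * ξ i = ξ i * dd i + 1 := sub_eq_iff_eq_add'.mp ((hrel i i).trans (if_pos rfl))
  induction k with
  | zero => simpa using h1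
  | succ k ih =>
    rw [pow_succ _ (k + 1), ← mul_assoc, ih, add_mul, smul_mul_assoc, ← pow_succ, mul_assoc, h1,
      mul_add, mul_one, ← mul_assoc, ← pow_succ, succ_nsmul _ (k + 1)]
    abel

theorem dd_mul_powProd_ξ (hξ : ∀ i j, ξ i * ξ j = ξ j * ξ i) (i : Fin n) (ρ : Fin n → ℕ) :
    dd i * powProd ξ ρ = powProd ξ ρ * dd i + ρ i • powProd ξ (ρ - Pi.single i 1) := by
  set ρ₀ := Function.update ρ i 0
  have hcomm : Commute (dd i) (powProd ξ ρ₀) := Commute.powProd_right fun j => by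
    rcases eq_or_ne j i with rfl | hj
    · simp [ρ₀]
    · exact (commute_dd_ξ_of_ne hrel hj.symm).pow_right _
  have hsplit : ∀ k, ρ i = k → ρ = Pi.single i k + ρ₀ := fun k hk => by
    funext j
    rcases eq_or_ne j i with rfl | hj
    · simp [ρ₀, hk]
    · simp [ρ₀, hj]
  rcases hρ : ρ i with _ | k
  · rw [hsplit 0 hρ, Pi.single_zero, zero_add, hcomm.eq, zero_smul, add_zero]
  · have hsub : ρ - Pi.single i 1 = Pi.single i k + ρ₀ := by
      funext j
      rcases eq_or_ne j i with rfl | hj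
      · simp [ρ₀, hρ]
      · simp [ρ₀, hj]
    rw [hsub, hsplit _ hρ, powProd_add hξ, powProd_add hξ, powProd_single, powProd_single,
      ← mul_assoc, dd_mul_ξ_pow_succ hrel, add_mul, smul_mul_assoc, mul_assoc, hcomm.eq,
      ← mul_assoc]

end WeylRelations

section LowerSpan

variable (K : Type*) [CommSemiring K] {W : Type*} [Ring W] [Algebra K W] {n : ℕ}

def lowerSpan (ξ dd : Fin n → W) (p : (Fin n → ℕ) × (Fin n → ℕ)) : Submodule K W :=
  Submodule.span K ((fun q => nm ξ dd q.1 q.2) '' Set.Iio p)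

variable {K} {ξ dd : Fin n → W}

theorem nm_mem_lowerSpan {p q : (Fin n → ℕ) × (Fin n → ℕ)} (h : q < p) :
    nm ξ dd q.1 q.2 ∈ lowerSpan K ξ dd p :=
  Submodule.subset_span ⟨q, h, rfl⟩

theorem lowerSpan_mono {p p' : (Fin n → ℕ) × (Fin n → ℕ)} (h : p ≤ p') :
    lowerSpan K ξ dd p ≤ lowerSpan K ξ dd p' :=
  Submodule.span_mono (Set.image_mono (Set.Iio_subset_Iio h))

theorem powProd_mul_mul_powProd_mem_lowerSpan (hξ : ∀ i j, ξ i * ξ j = ξ j * ξ i)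
    (hdd : ∀ i j, dd i * dd j = dd j * dd i) {ρ β : Fin n → ℕ} {y : W}
    (hy : y ∈ lowerSpan K ξ dd (ρ, β)) (lam sig : Fin n → ℕ) :
    powProd ξ lam * y * powProd dd sig ∈ lowerSpan K ξ dd (lam + ρ, β + sig) := by
  induction hy using Submodule.span_induction with
  | mem _ hq =>
    obtain ⟨⟨a, b⟩, hab, rfl⟩ := hq
    have hlt : (lam + a, b + sig) < (lam + ρ, β + sig) := by
      simpa using add_lt_add_right
        (add_lt_add_left (α := (Fin n → ℕ) × (Fin n → ℕ)) hab (lam, 0)) (0, sig)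
    convert nm_mem_lowerSpan hlt using 1
    simp only [nm_eq_powProd_mul_powProd, powProd_add hξ, powProd_add hdd, mul_assoc]
  | zero => simp
  | add u v _ _ hu hv => simpa only [mul_add, add_mul] using add_mem hu hv
  | smul c u _ hu => simpa only [mul_smul_comm, smul_mul_assoc] using Submodule.smul_mem _ c hu

variable (hξ : ∀ i j, ξ i * ξ j = ξ j * ξ i) (hdd : ∀ i j, dd i * dd j = dd j * dd i)
  (hrel : ∀ i j, dd i * ξ j - ξ j * dd i = if i = j then (1 : W) else 0)
include hξ hdd hrel

theorem powProd_dd_mul_powProd_ξ_sub_mem_lowerSpan (β ρ : Fin n → ℕ) :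
    powProd dd β * powProd ξ ρ - powProd ξ ρ * powProd dd β ∈ lowerSpan K ξ dd (ρ, β) := by
  induction β using WellFoundedLT.induction generalizing ρ with
  | ind β ih =>
  rcases eq_or_ne β 0 with rfl | hβ
  · simp
  obtain ⟨i, hi⟩ : ∃ i, β i ≠ 0 := by simpa [funext_iff] using hβ
  set β₀ := β - Pi.single i 1
  set ρ' := ρ - Pi.single i 1
  have hβ₀ : β = β₀ + Pi.single i 1 := by
    funext j
    rcases eq_or_ne j i with rfl | hj
    · simp [β₀]; omega
    · simp [β₀, hj]
  have hβ₀lt : β₀ < β := lt_of_le_of_ne tsub_le_self fun h => by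
    have := congrFun h i
    simp [β₀] at this
    omega
  -- `∂^β = ∂^{β₀} ∂ᵢ`: move `∂ᵢ` past `ξ^ρ`, then `∂^{β₀}` past `ξ^ρ` and `ξ^{ρ'}` by induction.
  have key : powProd dd β * powProd ξ ρ - powProd ξ ρ * powProd dd β =
      powProd ξ 0 * (powProd dd β₀ * powProd ξ ρ - powProd ξ ρ * powProd dd β₀) *
        powProd dd (Pi.single i 1) +
      ρ i • nm ξ dd ρ' β₀ +
      ρ i • (powProd dd β₀ * powProd ξ ρ' - powProd ξ ρ' * powProd dd β₀) := by
    rw [hβ₀, powProd_add hdd, powProd_single, pow_one, powProd_zero, mul_assoc,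
      dd_mul_powProd_ξ hrel hξ, nm_eq_powProd_mul_powProd]
    simp only [mul_add, mul_sub, sub_mul, mul_smul_comm, smul_sub, one_mul, mul_assoc]
    abel
  rw [key]
  refine add_mem (add_mem ?_ ?_) ?_
  · simpa [← hβ₀] using
      powProd_mul_mul_powProd_mem_lowerSpan hξ hdd (ih β₀ hβ₀lt ρ) 0 (Pi.single i 1)
  · exact Submodule.smul_of_tower_mem _ _
      (nm_mem_lowerSpan (Prod.mk_lt_mk_of_le_of_lt tsub_le_self hβ₀lt))
  · exact Submodule.smul_of_tower_mem _ _
      (lowerSpan_mono (Prod.mk_le_mk.mpr ⟨tsub_le_self, hβ₀lt.le⟩) (ih β₀ hβ₀lt ρ'))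

end LowerSpan

section WeylLowerTerms

variable {K : Type*} [CommRing K] {W : Type*} [Ring W] [Algebra K W] {n : ℕ}
  {ξ dd : Fin n → W}

theorem expof_strictMono : StrictMono fun p : (Fin n → ℕ) × (Fin n → ℕ) => expof p.1 p.2 :=
  Monotone.strictMono_of_injective
    (fun _ _ h => Finsupp.le_def.mpr fun | .inl i => h.1 i | .inr i => h.2 i)
    (fun _ _ h => Prod.ext (funext fun i => DFunLike.congr_fun h (Sum.inl i))
      (funext fun i => DFunLike.congr_fun h (Sum.inr i)))

theorem map_lowerSpan_le {Φ : W ≃ₗ[K] MvPolynomial (Fin n ⊕ Fin n) K}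
    (hΦ : ∀ lam mu, Φ (nm ξ dd lam mu) = monomial (expof lam mu) 1)
    (p : (Fin n → ℕ) × (Fin n → ℕ)) :
    (lowerSpan K ξ dd p).map Φ.toLinearMap ≤ restrictSupport K {x | x < expof p.1 p.2} := by
  rw [lowerSpan, Submodule.map_span_le]
  rintro _ ⟨q, hq, rfl⟩
  rw [LinearEquiv.coe_coe, hΦ, monomial_mem_restrictSupport]
  exact Or.inl (expof_strictMono hq)

variable (hξ : ∀ i j, ξ i * ξ j = ξ j * ξ i) (hdd : ∀ i j, dd i * dd j = dd j * dd i)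
  (hrel : ∀ i j, dd i * ξ j - ξ j * dd i = if i = j then (1 : W) else 0)
include hξ hdd hrel

theorem nm_mul_nm_sub_mem_lowerSpan (lam mu ρ sig : Fin n → ℕ) :
    nm ξ dd lam mu * nm ξ dd ρ sig - nm ξ dd (lam + ρ) (mu + sig) ∈
      lowerSpan K ξ dd (lam + ρ, mu + sig) := by
  convert powProd_mul_mul_powProd_mem_lowerSpan hξ hdd
    (powProd_dd_mul_powProd_ξ_sub_mem_lowerSpan hξ hdd hrel mu ρ) lam sig using 1
  simp only [nm_eq_powProd_mul_powProd, powProd_add hξ, powProd_add hdd, mul_sub, sub_mul,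
    mul_assoc]

theorem support_map_nmD_mul_nmD_sub_lt {Φ : W ≃ₗ[K] MvPolynomial (Fin n ⊕ Fin n) K}
    (hΦ : ∀ lam mu, Φ (nm ξ dd lam mu) = monomial (expof lam mu) 1)
    (m : MonomialOrder (Fin n ⊕ Fin n)) (e d : (Fin n ⊕ Fin n) →₀ ℕ) :
    ∀ x ∈ (Φ (nmD ξ dd e * nmD ξ dd d) - monomial (e + d) 1).support, x ≺[m] e + d := by
  intro x hx
  have hmem := map_lowerSpan_le hΦ _ (Submodule.mem_map_of_mem
    (nm_mul_nm_sub_mem_lowerSpan (K := K) hξ hdd hrel (fun i => e (.inl i)) (fun i => e (.inr i))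
      (fun i => d (.inl i)) (fun i => d (.inr i))))
  rw [LinearEquiv.coe_coe, map_sub, hΦ, mem_restrictSupport_iff] at hmem
  have hed : expof ((fun i => e (.inl i)) + fun i => d (.inl i))
      ((fun i => e (.inr i)) + fun i => d (.inr i)) = e + d := expof_split (e + d)
  rw [hed] at hmem
  exact m.toSyn_strictMono (hmem hx)

end WeylLowerTerms

theorem division_theorem_general
    {K : Type*} [Field K] {n : ℕ}
    {W : Type*} [Ring W] [Algebra K W] (ξ dd : Fin n → W)
    (hξcomm : ∀ i j, ξ i * ξ j = ξ j * ξ i)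
    (hddcomm : ∀ i j, dd i * dd j = dd j * dd i)
    (hrel : ∀ i j, dd i * ξ j - ξ j * dd i = if i = j then (1 : W) else 0)
    (Φ : W ≃ₗ[K] MvPolynomial (Fin n ⊕ Fin n) K)
    (hΦ : ∀ lam mu, Φ (nm ξ dd lam mu) = MvPolynomial.monomial (expof lam mu) 1)
    (r : TO ↥(NormalMonomials ξ dd)) (hr : IsNormalOrdering ξ dd r)
    (w : W) (F : Finset W) :
    ∃ (rem : W) (q : W → W),
      w = (∑ f ∈ F, q f * f) + rem ∧
      (∀ f ∈ F, f ≠ 0 → ∀ s ∈ (Φ rem).support, ∀ df, IsLTerm ξ dd Φ r f df →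
        ¬ (MvPolynomial.monomial df (1 : K) ∣ MvPolynomial.monomial s (1 : K))) ∧
      (w ≠ 0 → ∀ f ∈ F, q f * f ≠ 0 → ∀ dq dw, IsLTerm ξ dd Φ r (q f * f) dq →
        IsLTerm ξ dd Φ r w dw → rD ξ dd r dq dw) := by
  obtain ⟨rem, q, hsum, hrem, hq⟩ :=
    exists_div_of_support_map_mul_sub_lt Φ (inducedMonomialOrder hΦ hr) (map_nmD hΦ)
      (support_map_nmD_mul_nmD_sub_lt hξcomm hddcomm hrel hΦ _) F w
  refine ⟨rem, q, hsum, fun f hfF hf s hs df hdf hdvd => ?_,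
    fun _ f hfF _ dq dw hdq hdw => ?_⟩
  · refine hrem f hfF hf s hs ?_
    rw [hdf.degree_eq hΦ hr]
    exact (monomial_dvd_monomial.mp hdvd).1.resolve_left one_ne_zero
  · rw [← inducedMonomialOrder_toSyn_le_iff hΦ hr, ← hdq.degree_eq hΦ hr, ← hdw.degree_eq hΦ hr]
    exact hq f hfF

/-- division theorem in the Weyl algebra: for `w ∈ W`, a finite `F ⊆ W` and a
normal ordering `≼`, there are `rem ∈ W` and `(q_f)_{f∈F}` with
(a) `w = Σ_{f∈F} q_f·f + rem`;
(b) for nonzero `f ∈ F`, `LT_≼(f)` divides `Φ(s)` for no `s ∈ Supp(rem)`;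
(c) if `w ≠ 0` then `LT_≼(q_f·f) ≤ LT_≼(w)` whenever `q_f·f ≠ 0`. -/
theorem division_theorem
    {K : Type*} [Field K] [CharZero K] {n : ℕ} (hn : 1 ≤ n)
    {W : Type*} [Ring W] [Algebra K W] (ξ dd : Fin n → W)
    (hξcomm : ∀ i j, ξ i * ξ j = ξ j * ξ i)
    (hddcomm : ∀ i j, dd i * dd j = dd j * dd i)
    (hrel : ∀ i j, dd i * ξ j - ξ j * dd i = if i = j then (1 : W) else 0)
    (Φ : W ≃ₗ[K] MvPolynomial (Fin n ⊕ Fin n) K)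
    (hΦ : ∀ lam mu, Φ (nm ξ dd lam mu) = MvPolynomial.monomial (expof lam mu) 1)
    (r : TO ↥(NormalMonomials ξ dd)) (hr : IsNormalOrdering ξ dd r)
    (w : W) (F : Finset W) :
    ∃ (rem : W) (q : W → W),
      w = (∑ f ∈ F, q f * f) + rem ∧
      (∀ f ∈ F, f ≠ 0 → ∀ s ∈ (Φ rem).support, ∀ df, IsLTerm ξ dd Φ r f df →
        ¬ (MvPolynomial.monomial df (1 : K) ∣ MvPolynomial.monomial s (1 : K))) ∧
      (w ≠ 0 → ∀ f ∈ F, q f * f ≠ 0 → ∀ dq dw, IsLTerm ξ dd Φ r (q f * f) dq →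
        IsLTerm ξ dd Φ r w dw → rD ξ dd r dq dw) :=
  division_theorem_general ξ dd hξcomm hddcomm hrel Φ hΦ r hr w F
end

section
/- Let L be a left ideal of the n-th Weyl algebra W and F a finite subset of L. Then the set 𝔙_L(F) of all normal orderings ≼ of W such that F is a Gröbner basis of L with respect to ≼ is an open subset of NO(N). -/
open MvPolynomial

/-!
Fix `≼₀` for which `F` is a Gröbner basis. Requiring that every `b ∈ F` keep its `≼₀`-leading
monomial amounts to the finitely many conditions `c ≼ lt_{≼₀}(b)`, `c` in the support of `b`, so
it defines an open set of orderings, and `F` stays a Gröbner basis for every normal ordering `≼`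
in it. Indeed, since `ξ^α∂^β · ξ^λ∂^μ` is `ξ^{α+λ}∂^{β+μ}` plus terms with smaller exponents in
the product order, left multiplication by `ξ^α∂^β` shifts `≼`-leading exponents by `(α, β)`, so
the `≼`-leading exponents of `L` form an upper set. Now let `e` be one of them and reduce `X^e`
modulo `L` with respect to `≼` (a well-ordering, by Dickson's lemma): the difference lies in
`L`, and its `≼₀`-leading exponent `f` is a multiple of some `lt(b)`. Hence `f` is a `≼`-leading
exponent of `L`, so it is not in the support of the reduced part and must be `e`.
-/

section CommutingPowers

universe u

variable {M : Type u} [Monoid M] {m : ℕ}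

def prodPow (g : Fin m → M) (a : Fin m → ℕ) : M :=
  (List.ofFn fun i => g i ^ a i).prod

open scoped IsMulCommutative in
theorem exists_commMonoid_prodPow_eq {g : Fin m → M} (hg : ∀ i j, Commute (g i) (g j)) :
    ∃ (S : Type u) (_ : CommMonoid S) (f : S →* M) (G : Fin m → S),
      (∀ i, f (G i) = g i) ∧ ∀ a, prodPow g a = f (∏ i, G i ^ a i) := by
  have := Submonoid.isMulCommutative_closure (M := M) (s := Set.range g)
    (by rintro _ ⟨i, rfl⟩ _ ⟨j, rfl⟩; exact hg i j)
  refine ⟨Submonoid.closure (Set.range g), inferInstance, Submonoid.subtype _,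
    fun i => ⟨g i, Submonoid.subset_closure ⟨i, rfl⟩⟩, fun i => rfl, fun a => ?_⟩
  simp [prodPow, ← List.prod_ofFn, List.map_ofFn, Function.comp_def]

theorem prodPow_add {g : Fin m → M} (hg : ∀ i j, Commute (g i) (g j)) (a b : Fin m → ℕ) :
    prodPow g (a + b) = prodPow g a * prodPow g b := by
  obtain ⟨S, _, f, G, -, h⟩ := exists_commMonoid_prodPow_eq hg
  simp [h, pow_add, Finset.prod_mul_distrib]

theorem prodPow_single {g : Fin m → M} (hg : ∀ i j, Commute (g i) (g j)) (i : Fin m) (k : ℕ) :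
    prodPow g (Pi.single i k) = g i ^ k := by
  obtain ⟨S, _, f, G, hG, h⟩ := exists_commMonoid_prodPow_eq hg
  rw [h, Finset.prod_eq_single i (fun j _ hj => by simp [hj]) (by simp)]
  simp [hG]

theorem prodPow_zero (g : Fin m → M) : prodPow g 0 = 1 := by
  simp [prodPow]

theorem commute_prodPow {x : M} {g : Fin m → M} {a : Fin m → ℕ}
    (h : ∀ j, a j ≠ 0 → Commute x (g j)) : Commute x (prodPow g a) := by
  refine Commute.list_prod_right _ _ fun y hy => ?_
  obtain ⟨j, rfl⟩ := List.mem_ofFn.mp hy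
  by_cases hj : a j = 0
  · simp [hj]
  · exact (h j hj).pow_right _

theorem mul_pow_succ_eq_of_mul_eq_add_one {R : Type*} [Ring R] {x g : R}
    (h : x * g = g * x + 1) (k : ℕ) :
    x * g ^ (k + 1) = g ^ (k + 1) * x + (k + 1 : ℕ) * g ^ k := by
  induction k with
  | zero => simpa using h
  | succ k ih =>
    calc x * g ^ (k + 1 + 1) = (x * g ^ (k + 1)) * g := by rw [mul_assoc, ← pow_succ]
      _ = g ^ (k + 1) * (x * g) + (k + 1 : ℕ) * g ^ (k + 1) := by
        rw [ih, add_mul, mul_assoc, mul_assoc, ← pow_succ]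
      _ = g ^ (k + 1 + 1) * x + (k + 1 + 1 : ℕ) * g ^ (k + 1) := by
        rw [h, mul_add, ← mul_assoc, ← pow_succ, mul_one, add_assoc]
        push_cast
        noncomm_ring

theorem mul_pow_eq_of_mul_eq_add_one {R : Type*} [Ring R] {x g : R} (h : x * g = g * x + 1)
    (k : ℕ) : x * g ^ k = g ^ k * x + k * g ^ (k - 1) := by
  rcases k with _ | k
  · simp
  · exact mul_pow_succ_eq_of_mul_eq_add_one h k

theorem Function.update_eq_update_zero_add_single {ι A : Type*} [DecidableEq ι] [AddZeroClass A]
    (a : ι → A) (i : ι) (k : A) :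
    Function.update a i k = Function.update a i 0 + Pi.single i k := by
  ext j
  by_cases hj : j = i <;> simp [hj]

theorem mul_prodPow_eq {R : Type*} [Ring R] {g : Fin m → R} (hg : ∀ i j, Commute (g i) (g j))
    {x : R} {i : Fin m} (hxi : x * g i = g i * x + 1) (hxj : ∀ j ≠ i, Commute x (g j))
    (a : Fin m → ℕ) :
    x * prodPow g a = prodPow g a * x + a i * prodPow g (Function.update a i (a i - 1)) := by
  set P₀ := prodPow g (Function.update a i 0)
  have hP : ∀ k, prodPow g (Function.update a i k) = P₀ * g i ^ k := fun k => by
    rw [Function.update_eq_update_zero_add_single, prodPow_add hg, prodPow_single hg]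
  have hPa : prodPow g a = P₀ * g i ^ a i := by rw [← hP, Function.update_eq_self]
  have hx₀ : Commute x P₀ := commute_prodPow fun j hj => hxj j (by rintro rfl; simp at hj)
  rw [hPa, hP, ← mul_assoc, hx₀.eq, mul_assoc, mul_pow_eq_of_mul_eq_add_one hxi, mul_add,
    ← mul_assoc, ← mul_assoc, ← (Nat.cast_commute (a i) P₀).eq, mul_assoc, mul_assoc]

end CommutingPowers

theorem Pi.induction_on_add_single {ι : Type*} [Finite ι] [DecidableEq ι]
    {P : (ι → ℕ) → Prop} (zero : P 0) (step : ∀ f i, P f → P (f + Pi.single i 1))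
    (f : ι → ℕ) : P f := by
  suffices ∀ g f, P f → P (f + g) by simpa using this f 0 zero
  intro g
  induction g using Pi.single_induction with
  | zero => simp
  | add g h hg hh => exact fun f hf => add_assoc f g h ▸ hh _ (hg f hf)
  | single i k =>
    induction k with
    | zero => simp
    | succ k ih =>
      intro f hf
      rw [Pi.single_add, ← add_assoc]
      exact step _ i (ih f hf)

theorem expof_add {n : ℕ} (a b c d : Fin n → ℕ) :
    expof (a + c) (b + d) = expof a b + expof c d := by
  ext (i | i) <;> simp [expof]

theorem expof_comp_inl_inr {n : ℕ} (d : (Fin n ⊕ Fin n) →₀ ℕ) :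
    expof (fun i => d (Sum.inl i)) (fun i => d (Sum.inr i)) = d := by
  ext (i | i) <;> simp [expof]

section WeylAlgebra

variable {K : Type*} [Field K] {n : ℕ} {W : Type*} [Ring W] [Algebra K W]

theorem nm_eq_prodPow (ξ dd : Fin n → W) (lam mu : Fin n → ℕ) :
    nm ξ dd lam mu = prodPow ξ lam * prodPow dd mu :=
  rfl

def MapsNormalMonomials (ξ dd : Fin n → W) (Φ : W ≃ₗ[K] MvPolynomial (Fin n ⊕ Fin n) K) :
    Prop :=
  ∀ lam mu, Φ (nm ξ dd lam mu) = monomial (expof lam mu) 1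

structure WeylRelations (ξ dd : Fin n → W) : Prop where
  commute_ξ : ∀ i j, Commute (ξ i) (ξ j)
  commute_dd : ∀ i j, Commute (dd i) (dd j)
  dd_mul_sub_mul_dd : ∀ i j, dd i * ξ j - ξ j * dd i = if i = j then (1 : W) else 0

namespace WeylRelations

variable {ξ dd : Fin n → W}

theorem dd_mul_ξ_self (hW : WeylRelations ξ dd) (i : Fin n) : dd i * ξ i = ξ i * dd i + 1 := by
  rw [← sub_eq_iff_eq_add', hW.dd_mul_sub_mul_dd, if_pos rfl]

theorem commute_dd_ξ (hW : WeylRelations ξ dd) {i j : Fin n} (h : j ≠ i) :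
    Commute (dd i) (ξ j) :=
  sub_eq_zero.mp ((hW.dd_mul_sub_mul_dd i j).trans (if_neg h.symm))

theorem nm_add_single (hW : WeylRelations ξ dd) (al be : Fin n → ℕ) (i : Fin n) :
    nm ξ dd al (be + Pi.single i 1) = nm ξ dd al be * dd i := by
  rw [nm_eq_prodPow, nm_eq_prodPow, prodPow_add hW.commute_dd, prodPow_single hW.commute_dd,
    pow_one, mul_assoc]

theorem nm_zero_mul (hW : WeylRelations ξ dd) (al lam mu : Fin n → ℕ) :
    nm ξ dd al 0 * nm ξ dd lam mu = nm ξ dd (al + lam) mu := by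
  rw [nm_eq_prodPow, nm_eq_prodPow, nm_eq_prodPow, prodPow_zero, mul_one,
    prodPow_add hW.commute_ξ, mul_assoc]

theorem dd_mul_nm (hW : WeylRelations ξ dd) (i : Fin n) (lam mu : Fin n → ℕ) :
    dd i * nm ξ dd lam mu = nm ξ dd lam (mu + Pi.single i 1)
      + lam i * nm ξ dd (Function.update lam i (lam i - 1)) mu := by
  have hμ : dd i * prodPow dd mu = prodPow dd mu * dd i :=
    (commute_prodPow fun j _ => hW.commute_dd i j).eq
  rw [hW.nm_add_single, nm_eq_prodPow, nm_eq_prodPow, ← mul_assoc,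
    mul_prodPow_eq hW.commute_ξ (hW.dd_mul_ξ_self i) (fun j hj => hW.commute_dd_ξ hj),
    add_mul, mul_assoc, hμ, ← mul_assoc, mul_assoc _ (prodPow ξ _)]

end WeylRelations

section Multiplication

variable {ξ dd : Fin n → W} {Φ : W ≃ₗ[K] MvPolynomial (Fin n ⊕ Fin n) K}

theorem nm_mul_nm_sub_mem (hW : WeylRelations ξ dd)
    (hΦ : MapsNormalMonomials ξ dd Φ) (al be lam mu : Fin n → ℕ) :
    Φ (nm ξ dd al be * nm ξ dd lam mu) - monomial (expof (al + lam) (be + mu)) 1 ∈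
      restrictSupport K (Set.Iio (expof (al + lam) (be + mu))) := by
  induction be using Pi.induction_on_add_single generalizing lam mu with
  | zero => simp [hW.nm_zero_mul, hΦ (al + lam) mu]
  | step be i ih =>
    rw [hW.nm_add_single, mul_assoc, hW.dd_mul_nm, mul_add, map_add, add_sub_right_comm,
      show be + Pi.single i 1 + mu = be + (mu + Pi.single i 1) by abel]
    refine add_mem (ih lam _) ?_
    rcases eq_or_ne (lam i) 0 with h | h
    · simp [h]
    set lam' := Function.update lam i (lam i - 1)
    have hlam : lam = lam' + Pi.single i 1 := by
      ext j
      by_cases hj : j = i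
      · subst hj; simp [lam']; omega
      · simp [lam', hj]
    set c := expof (al + lam') (be + mu)
    have hc : c < expof (al + lam) (be + (mu + Pi.single i 1)) := by
      rw [hlam, ← add_assoc, ← add_assoc, expof_add]
      exact lt_add_of_pos_right _ (pos_iff_ne_zero.mpr fun h0 => by
        simpa [expof] using DFunLike.congr_fun h0 (Sum.inl i))
    rw [← mul_assoc, ← (Nat.cast_commute _ _).eq, mul_assoc, ← nsmul_eq_mul, map_nsmul,
      ← sub_add_cancel (Φ _) (monomial c 1)]
    refine nsmul_mem (add_mem ?_ ?_) _
    · exact restrictSupport_mono K (Set.Iio_subset_Iio hc.le) (ih lam' mu)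
    · simpa using hc

end Multiplication

section Orderings

variable {ξ dd : Fin n → W} {Φ : W ≃ₗ[K] MvPolynomial (Fin n ⊕ Fin n) K}
  {r : TO ↥(NormalMonomials ξ dd)}

theorem rD_refl (r : TO ↥(NormalMonomials ξ dd)) (d : (Fin n ⊕ Fin n) →₀ ℕ) : rD ξ dd r d d :=
  (r.2.2.2 _ _).elim id id

theorem rD_trans {c d e : (Fin n ⊕ Fin n) →₀ ℕ} :
    rD ξ dd r c d → rD ξ dd r d e → rD ξ dd r c e :=
  r.2.2.1 _ _ _

theorem rD_total (r : TO ↥(NormalMonomials ξ dd)) (c d : (Fin n ⊕ Fin n) →₀ ℕ) :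
    rD ξ dd r c d ∨ rD ξ dd r d c :=
  r.2.2.2 _ _

theorem apply_nmD (hΦ : MapsNormalMonomials ξ dd Φ)
    (d : (Fin n ⊕ Fin n) →₀ ℕ) : Φ (nmD ξ dd d) = monomial d 1 :=
  (hΦ _ _).trans (by rw [expof_comp_inl_inr])

theorem symm_apply_monomial (hΦ : MapsNormalMonomials ξ dd Φ)
    (d : (Fin n ⊕ Fin n) →₀ ℕ) (k : K) : Φ.symm (monomial d k) = k • (nmD ξ dd d : W) := by
  rw [LinearEquiv.symm_apply_eq, map_smul, apply_nmD hΦ, smul_monomial, smul_eq_mul, mul_one]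

theorem rD_antisymm (hΦ : MapsNormalMonomials ξ dd Φ)
    {c d : (Fin n ⊕ Fin n) →₀ ℕ} (h₁ : rD ξ dd r c d) (h₂ : rD ξ dd r d c) : c = d := by
  have := congrArg (fun x => Φ x.1) (r.2.1 _ _ h₁ h₂)
  simp only [apply_nmD hΦ] at this
  exact monomial_left_injective one_ne_zero this

theorem IsNormalOrdering.rD_zero (hr : IsNormalOrdering ξ dd r) (d : (Fin n ⊕ Fin n) →₀ ℕ) :
    rD ξ dd r 0 d :=
  hr.1 _ _

theorem IsNormalOrdering.rD_add_left (hr : IsNormalOrdering ξ dd r) (a : (Fin n ⊕ Fin n) →₀ ℕ)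
    {c d : (Fin n ⊕ Fin n) →₀ ℕ} (h : rD ξ dd r c d) : rD ξ dd r (a + c) (a + d) := by
  rw [add_comm a c, add_comm a d]
  exact hr.2 _ _ _ _ _ _ h

theorem IsNormalOrdering.rD_of_le (hr : IsNormalOrdering ξ dd r) {c d : (Fin n ⊕ Fin n) →₀ ℕ}
    (h : c ≤ d) : rD ξ dd r c d := by
  simpa [add_tsub_cancel_of_le h] using hr.rD_add_left c (hr.rD_zero (d - c))

def strictlyBelow (ξ dd : Fin n → W) (r : TO ↥(NormalMonomials ξ dd))
    (d : (Fin n ⊕ Fin n) →₀ ℕ) : Set ((Fin n ⊕ Fin n) →₀ ℕ) :=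
  {c | rD ξ dd r c d ∧ c ≠ d}

theorem strictlyBelow_subset (hΦ : MapsNormalMonomials ξ dd Φ)
    {d e : (Fin n ⊕ Fin n) →₀ ℕ} (h : e ∈ strictlyBelow ξ dd r d) :
    strictlyBelow ξ dd r e ⊆ strictlyBelow ξ dd r d := by
  rintro c ⟨hce, hne⟩
  refine ⟨rD_trans hce h.1, ?_⟩
  rintro rfl
  exact hne (rD_antisymm hΦ hce h.1)

theorem IsNormalOrdering.Iio_subset_strictlyBelow (hr : IsNormalOrdering ξ dd r)
    (d : (Fin n ⊕ Fin n) →₀ ℕ) : Set.Iio d ⊆ strictlyBelow ξ dd r d :=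
  fun _ hc => ⟨hr.rD_of_le hc.le, hc.ne⟩

theorem IsNormalOrdering.wellFounded (hr : IsNormalOrdering ξ dd r)
    (hΦ : MapsNormalMonomials ξ dd Φ) :
    WellFounded fun c d => c ∈ strictlyBelow ξ dd r d := by
  have : IsPreorder _ (rD ξ dd r) := { refl := rD_refl r, trans := fun _ _ _ => rD_trans }
  refine Subrelation.wf (fun {c d} h => ⟨h.1, fun h' => h.2 (rD_antisymm hΦ h.1 h')⟩)
    (WellQuasiOrdered.wellFounded fun f => ?_)
  obtain ⟨i, j, hij, hle⟩ := wellQuasiOrdered_le f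
  exact ⟨i, j, hij, hr.rD_of_le hle⟩

theorem exists_rD_max (r : TO ↥(NormalMonomials ξ dd)) {s : Finset ((Fin n ⊕ Fin n) →₀ ℕ)}
    (hs : s.Nonempty) : ∃ d ∈ s, ∀ c ∈ s, rD ξ dd r c d := by
  induction hs using Finset.Nonempty.cons_induction with
  | singleton a => exact ⟨a, by simp [rD_refl]⟩
  | cons a s ha hs ih =>
    obtain ⟨d, hd, hmax⟩ := ih
    rcases rD_total r a d with had | hda
    · exact ⟨d, by simp [hd], by simpa [had] using hmax⟩
    · exact ⟨a, by simp, by simpa [rD_refl] using fun c hc => rD_trans (hmax c hc) hda⟩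

theorem exists_isLTerm (r : TO ↥(NormalMonomials ξ dd)) {w : W} (hw : w ≠ 0) :
    ∃ d, IsLTerm ξ dd Φ r w d :=
  exists_rD_max r (support_nonempty.mpr (by simpa using hw))

theorem IsLTerm.ne_zero {w : W} {d : (Fin n ⊕ Fin n) →₀ ℕ} (h : IsLTerm ξ dd Φ r w d) :
    w ≠ 0 := by
  rintro rfl
  simpa using h.1

theorem IsLTerm.unique (hΦ : MapsNormalMonomials ξ dd Φ)
    {w : W} {d d' : (Fin n ⊕ Fin n) →₀ ℕ} (h : IsLTerm ξ dd Φ r w d)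
    (h' : IsLTerm ξ dd Φ r w d') : d = d' :=
  rD_antisymm hΦ (h'.2 d h.1) (h.2 d' h'.1)

theorem coeff_eq_zero_of_mem_restrictSupport {R σ : Type*} [CommSemiring R]
    {p : MvPolynomial σ R} {s : Set (σ →₀ ℕ)} (hp : p ∈ restrictSupport R s) {d : σ →₀ ℕ}
    (hd : d ∉ s) : coeff d p = 0 :=
  notMem_support_iff.mp fun h => hd ((mem_restrictSupport_iff R).mp hp h)

theorem IsLTerm.sub_monomial_mem {w : W} {d : (Fin n ⊕ Fin n) →₀ ℕ}
    (h : IsLTerm ξ dd Φ r w d) :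
    Φ w - monomial d (coeff d (Φ w)) ∈ restrictSupport K (strictlyBelow ξ dd r d) := by
  rw [mem_restrictSupport_iff]
  intro c hc
  rw [Finset.mem_coe, mem_support_iff, coeff_sub, coeff_monomial] at hc
  by_cases hdc : d = c
  · simp [hdc] at hc
  · rw [if_neg hdc, sub_zero] at hc
    exact ⟨h.2 c (mem_support_iff.mpr hc), Ne.symm hdc⟩

theorem isLTerm_of_sub_monomial_mem {w : W} {d : (Fin n ⊕ Fin n) →₀ ℕ} {k : K} (hk : k ≠ 0)
    (h : Φ w - monomial d k ∈ restrictSupport K (strictlyBelow ξ dd r d)) :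
    IsLTerm ξ dd Φ r w d := by
  have hcoeff : ∀ c ≠ d, coeff c (Φ w) = coeff c (Φ w - monomial d k) := fun c hc => by
    simp [coeff_monomial, Ne.symm hc]
  have hd : coeff d (Φ w) = k := by
    simpa [sub_eq_zero] using coeff_eq_zero_of_mem_restrictSupport h (fun h' => h'.2 rfl)
  refine ⟨mem_support_iff.mpr (hd ▸ hk), fun c hc => ?_⟩
  rcases eq_or_ne c d with rfl | hcd
  · exact rD_refl r c
  · rw [mem_support_iff, hcoeff c hcd] at hc
    exact ((mem_restrictSupport_iff K).mp h (mem_support_iff.mpr hc)).1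

theorem restrictSupport_le_comap_iff {R σ M : Type*} [CommSemiring R] [AddCommMonoid M]
    [Module R M] (T : MvPolynomial σ R →ₗ[R] M) (N : Submodule R M) (s : Set (σ →₀ ℕ)) :
    restrictSupport R s ≤ N.comap T ↔ ∀ e ∈ s, T (monomial e 1) ∈ N := by
  rw [restrictSupport_eq_span, Submodule.span_le, Set.image_subset_iff]
  rfl

theorem isLTerm_nmD_mul (hW : WeylRelations ξ dd)
    (hΦ : MapsNormalMonomials ξ dd Φ)
    (hr : IsNormalOrdering ξ dd r) (a : (Fin n ⊕ Fin n) →₀ ℕ) {x : W}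
    {d : (Fin n ⊕ Fin n) →₀ ℕ} (h : IsLTerm ξ dd Φ r x d) :
    IsLTerm ξ dd Φ r (nmD ξ dd a * x) (a + d) := by
  have hmono : ∀ e, Φ (nmD ξ dd a * nmD ξ dd e) - monomial (a + e) 1 ∈
      restrictSupport K (strictlyBelow ξ dd r (a + e)) := fun e => by
    refine restrictSupport_mono K (hr.Iio_subset_strictlyBelow _) ?_
    have := nm_mul_nm_sub_mem hW hΦ (fun i => a (Sum.inl i)) (fun i => a (Sum.inr i))
      (fun i => e (Sum.inl i)) (fun i => e (Sum.inr i))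
    rwa [expof_add, expof_comp_inl_inr, expof_comp_inl_inr] at this
  set T := Φ.toLinearMap ∘ₗ LinearMap.mulLeft K (nmD ξ dd a : W) ∘ₗ Φ.symm.toLinearMap
  have hT : ∀ k e, T (monomial e k) = k • Φ (nmD ξ dd a * nmD ξ dd e) := fun k e => by
    simp [T, symm_apply_monomial hΦ]
  have hbelow : restrictSupport K (strictlyBelow ξ dd r d) ≤
      (restrictSupport K (strictlyBelow ξ dd r (a + d))).comap T := by
    rw [restrictSupport_le_comap_iff]
    intro e he
    have hae : a + e ∈ strictlyBelow ξ dd r (a + d) := ⟨hr.rD_add_left a he.1, by simpa using he.2⟩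
    rw [hT, one_smul, ← sub_add_cancel (Φ _) (monomial (a + e) 1)]
    exact add_mem (restrictSupport_mono K (strictlyBelow_subset hΦ hae) (hmono e))
      ((monomial_mem_restrictSupport K).mpr (.inl hae))
  set k := coeff d (Φ x)
  refine isLTerm_of_sub_monomial_mem (k := k) (mem_support_iff.mp h.1) ?_
  have hsplit : Φ (nmD ξ dd a * x) - monomial (a + d) k =
      T (Φ x - monomial d k) + k • (Φ (nmD ξ dd a * nmD ξ dd d) - monomial (a + d) 1) := by
    rw [map_sub, hT, smul_sub, smul_monomial, smul_eq_mul, mul_one]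
    simp [T]
  rw [hsplit]
  exact add_mem (hbelow h.sub_monomial_mem) (Submodule.smul_mem _ k (hmono d))

end Orderings

section Reduction

variable {ξ dd : Fin n → W} {Φ : W ≃ₗ[K] MvPolynomial (Fin n ⊕ Fin n) K}
  {r : TO ↥(NormalMonomials ξ dd)}

def leadingExps (ξ dd : Fin n → W) (Φ : W ≃ₗ[K] MvPolynomial (Fin n ⊕ Fin n) K)
    (r : TO ↥(NormalMonomials ξ dd)) (S : Set W) : Set ((Fin n ⊕ Fin n) →₀ ℕ) :=
  {d | ∃ x ∈ S, IsLTerm ξ dd Φ r x d}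

theorem leadingExps_mono {S T : Set W} (h : S ⊆ T) :
    leadingExps ξ dd Φ r S ⊆ leadingExps ξ dd Φ r T :=
  fun _ ⟨x, hx, hxd⟩ => ⟨x, h hx, hxd⟩

theorem isUpperSet_leadingExps (hW : WeylRelations ξ dd)
    (hΦ : MapsNormalMonomials ξ dd Φ)
    (hr : IsNormalOrdering ξ dd r) (L : Submodule W W) :
    IsUpperSet (leadingExps ξ dd Φ r L) := by
  rintro d f hdf ⟨x, hx, hxd⟩
  refine ⟨nmD ξ dd (f - d) * x, L.smul_mem _ hx, ?_⟩
  simpa [tsub_add_cancel_of_le hdf] using isLTerm_nmD_mul hW hΦ hr (f - d) hxd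

/-- Normal forms modulo `L` exist: reduce the leading monomial, by well-founded induction. -/
theorem map_sup_restrictSupport_compl_leadingExps_eq_top
    (hΦ : MapsNormalMonomials ξ dd Φ)
    (hr : IsNormalOrdering ξ dd r) (L : Submodule W W) :
    (L.restrictScalars K).map (Φ : W →ₗ[K] MvPolynomial (Fin n ⊕ Fin n) K) ⊔
      restrictSupport K (leadingExps ξ dd Φ r L)ᶜ = ⊤ := by
  set S := (L.restrictScalars K).map (Φ : W →ₗ[K] MvPolynomial (Fin n ⊕ Fin n) K) ⊔
      restrictSupport K (leadingExps ξ dd Φ r L)ᶜ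
  suffices ∀ d, monomial d 1 ∈ S by
    rw [eq_top_iff, ← restrictSupport_univ, restrictSupport_eq_span, Submodule.span_le]
    rintro _ ⟨d, -, rfl⟩
    exact this d
  intro d
  induction d using (hr.wellFounded hΦ).induction with
  | _ d ih =>
  by_cases hd : d ∈ leadingExps ξ dd Φ r L
  · obtain ⟨x, hx, hxd⟩ := hd
    have hbelow : restrictSupport K (strictlyBelow ξ dd r d) ≤ S := by
      rw [restrictSupport_eq_span, Submodule.span_le]
      rintro _ ⟨c, hc, rfl⟩
      exact ih c hc
    have hk := mem_support_iff.mp hxd.1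
    have : monomial d (1 : K) =
        (coeff d (Φ x))⁻¹ • (Φ x - (Φ x - monomial d (coeff d (Φ x)))) := by
      rw [sub_sub_cancel, smul_monomial, smul_eq_mul, inv_mul_cancel₀ hk]
    rw [this]
    exact S.smul_mem _ (sub_mem (Submodule.mem_sup_left ⟨x, hx, rfl⟩)
      (hbelow hxd.sub_monomial_mem))
  · exact Submodule.mem_sup_right ((monomial_mem_restrictSupport K).mpr (.inl hd))

end Reduction

section GroebnerBases

variable {ξ dd : Fin n → W} {Φ : W ≃ₗ[K] MvPolynomial (Fin n ⊕ Fin n) K}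
  {r r₀ : TO ↥(NormalMonomials ξ dd)}

theorem LTIdeal_eq_span (S : Set W) :
    LTIdeal ξ dd Φ r S = Ideal.span ((monomial · 1) '' leadingExps ξ dd Φ r S) := by
  refine congrArg Ideal.span (Set.ext fun p => ⟨?_, ?_⟩)
  · rintro ⟨x, hx, -, d, hxd, rfl⟩
    exact ⟨d, ⟨x, hx, hxd⟩, rfl⟩
  · rintro ⟨d, ⟨x, hx, hxd⟩, rfl⟩
    exact ⟨x, hx, hxd.ne_zero, d, hxd, rfl⟩

theorem isGroebnerBasis_iff (L : Submodule W W) (F : Finset W) :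
    IsGroebnerBasis ξ dd Φ r L F ↔ (F : Set W) ⊆ L ∧ Submodule.span W (F : Set W) = L ∧
      ∀ e ∈ leadingExps ξ dd Φ r L, ∃ d ∈ leadingExps ξ dd Φ r F, d ≤ e := by
  change (_ ∧ _ ∧ LTIdeal ξ dd Φ r L = LTIdeal ξ dd Φ r F) ↔ _
  refine and_congr_right fun hFL => and_congr_right fun _ => ?_
  rw [LTIdeal_eq_span, LTIdeal_eq_span, le_antisymm_iff,
    and_iff_left (Ideal.span_mono (Set.image_mono (leadingExps_mono hFL))), Ideal.span_le,
    Set.image_subset_iff]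
  refine forall₂_congr fun e _ => ?_
  simp [mem_ideal_span_monomial_image]

theorem leadingExps_eq_of_isLTerm_imp
    (hΦ : MapsNormalMonomials ξ dd Φ) {S : Set W}
    (h : ∀ b ∈ S, ∀ d, IsLTerm ξ dd Φ r₀ b d → IsLTerm ξ dd Φ r b d) :
    leadingExps ξ dd Φ r S = leadingExps ξ dd Φ r₀ S := by
  ext d
  constructor
  · rintro ⟨b, hb, hbd⟩
    obtain ⟨d', hd'⟩ := exists_isLTerm (Φ := Φ) r₀ hbd.ne_zero
    exact ⟨b, hb, hbd.unique hΦ (h b hb d' hd') ▸ hd'⟩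
  · rintro ⟨b, hb, hbd⟩
    exact ⟨b, hb, h b hb d hbd⟩

def sameLeadingTerms (ξ dd : Fin n → W) (Φ : W ≃ₗ[K] MvPolynomial (Fin n ⊕ Fin n) K)
    (r₀ : TO ↥(NormalMonomials ξ dd)) (F : Finset W) : Set (TO ↥(NormalMonomials ξ dd)) :=
  {r | ∀ b ∈ F, ∀ d, IsLTerm ξ dd Φ r₀ b d → IsLTerm ξ dd Φ r b d}

theorem isGroebnerBasis_of_mem_sameLeadingTerms (hW : WeylRelations ξ dd)
    (hΦ : MapsNormalMonomials ξ dd Φ)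
    (hr : IsNormalOrdering ξ dd r) {L : Submodule W W} {F : Finset W}
    (h₀ : IsGroebnerBasis ξ dd Φ r₀ L F)
    (h : r ∈ sameLeadingTerms ξ dd Φ r₀ F) : IsGroebnerBasis ξ dd Φ r L F := by
  rw [isGroebnerBasis_iff] at h₀ ⊢
  obtain ⟨hFL, hspan, h₀⟩ := h₀
  have hF := leadingExps_eq_of_isLTerm_imp hΦ (S := F) h
  refine ⟨hFL, hspan, fun e he => ?_⟩
  by_contra! hcon
  obtain ⟨_, ⟨x, hx, rfl⟩, s, hs, hxs⟩ := Submodule.mem_sup.mp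
    ((map_sup_restrictSupport_compl_leadingExps_eq_top hΦ hr L).symm ▸ Submodule.mem_top :
      monomial e (1 : K) ∈ _)
  rw [LinearEquiv.coe_coe] at hxs
  have hes : coeff e s = 0 := coeff_eq_zero_of_mem_restrictSupport hs (not_not.mpr he)
  have hx0 : x ≠ 0 := by
    rintro rfl
    simpa [hes] using congrArg (coeff e) hxs
  obtain ⟨f, hf⟩ := exists_isLTerm (Φ := Φ) r₀ hx0
  obtain ⟨d, hd, hdf⟩ := h₀ f ⟨x, hx, hf⟩
  have hfL : f ∈ leadingExps ξ dd Φ r L :=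
    isUpperSet_leadingExps hW hΦ hr L hdf (leadingExps_mono hFL (hF ▸ hd))
  have hfx := hf.1
  rw [eq_sub_of_add_eq hxs] at hfx
  rcases Finset.mem_union.mp (support_sub _ _ _ hfx) with hfe | hfs
  · rw [Finset.mem_singleton.mp (support_monomial_subset hfe)] at hdf
    exact hcon d (hF ▸ hd) hdf
  · exact (mem_restrictSupport_iff K).mp hs hfs hfL

end GroebnerBases

section Topology

variable {ξ dd : Fin n → W}

theorem isOpen_sameLeadingTerms (Φ : W ≃ₗ[K] MvPolynomial (Fin n ⊕ Fin n) K)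
    (r₀ : TO ↥(NormalMonomials ξ dd)) (F : Finset W) :
    IsOpen (sameLeadingTerms ξ dd Φ r₀ F) := by
  have : sameLeadingTerms ξ dd Φ r₀ F = ⋂ b ∈ F, ⋂ d ∈ {d | IsLTerm ξ dd Φ r₀ b d},
      ⋂ c ∈ (Φ b).support, USet (nmD ξ dd c) (nmD ξ dd d) := by
    ext r
    simp only [sameLeadingTerms, Set.mem_ofPred_eq, Set.mem_iInter]
    exact forall₂_congr fun b _ => forall₂_congr fun d hd => ⟨fun h => h.2, fun h => ⟨hd.1, h⟩⟩
  rw [this]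
  refine isOpen_biInter_finset fun b _ => ?_
  refine Set.Finite.isOpen_biInter ((Φ b).support.finite_toSet.subset fun d hd => hd.1)
    fun d _ => ?_
  exact isOpen_biInter_finset fun c _ => TopologicalSpace.isOpen_generateFrom_of_mem ⟨_, _, rfl⟩

end Topology

end WeylAlgebra

theorem groebnerBasis_orderings_isOpen_general
    {K : Type*} [Field K] {n : ℕ}
    {W : Type*} [Ring W] [Algebra K W] (ξ dd : Fin n → W)
    (hξcomm : ∀ i j, ξ i * ξ j = ξ j * ξ i)
    (hddcomm : ∀ i j, dd i * dd j = dd j * dd i)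
    (hrel : ∀ i j, dd i * ξ j - ξ j * dd i = if i = j then (1 : W) else 0)
    (Φ : W ≃ₗ[K] MvPolynomial (Fin n ⊕ Fin n) K)
    (hΦ : ∀ lam mu, Φ (nm ξ dd lam mu) = MvPolynomial.monomial (expof lam mu) 1)
    (L : Submodule W W) (F : Finset W) :
    IsOpen {ρ : ↥(NOSet ξ dd) | IsGroebnerBasis ξ dd Φ ρ.1 L F} := by
  have hW : WeylRelations ξ dd := ⟨hξcomm, hddcomm, hrel⟩
  rw [isOpen_iff_forall_mem_open]
  intro ρ₀ h₀
  refine ⟨Subtype.val ⁻¹' sameLeadingTerms ξ dd Φ ρ₀.1 F, fun ρ hρ => ?_,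
    (isOpen_sameLeadingTerms Φ ρ₀.1 F).preimage continuous_subtype_val, fun _ _ _ hd => hd⟩
  exact isGroebnerBasis_of_mem_sameLeadingTerms hW hΦ ρ.2 h₀ hρ

/-- for a left ideal `L` of `W` and a finite subset `F ⊆ L`, the set
`𝔙_L(F)` of all normal orderings `≼` for which `F` is a Gröbner basis of `L` is open in the
subspace `NO(N)` of `TO(N)`. -/
theorem groebnerBasis_orderings_isOpen
    {K : Type*} [Field K] [CharZero K] {n : ℕ} (hn : 1 ≤ n)
    {W : Type*} [Ring W] [Algebra K W] (ξ dd : Fin n → W)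
    (hξcomm : ∀ i j, ξ i * ξ j = ξ j * ξ i)
    (hddcomm : ∀ i j, dd i * dd j = dd j * dd i)
    (hrel : ∀ i j, dd i * ξ j - ξ j * dd i = if i = j then (1 : W) else 0)
    (Φ : W ≃ₗ[K] MvPolynomial (Fin n ⊕ Fin n) K)
    (hΦ : ∀ lam mu, Φ (nm ξ dd lam mu) = MvPolynomial.monomial (expof lam mu) 1)
    (L : Submodule W W) (F : Finset W) (hF : (F : Set W) ⊆ (L : Set W)) :
    IsOpen {ρ : ↥(NOSet ξ dd) | IsGroebnerBasis ξ dd Φ ρ.1 L F} :=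
  groebnerBasis_orderings_isOpen_general ξ dd hξcomm hddcomm hrel Φ hΦ L F
end
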